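/- arXiv:2304.12515 — 5 statements merged into one kernel-verified Lean document; each statement's English description precedes it below -/
import Mathlib

section
/- For every C > 0 there exist C̃ > 0 and ε₀ > 0 with the following property: if M and M' are metric spaces that are both locally C-Lipschitz contractible and C-doubling, 0 < ε < ε₀, and f₀, f₁ : M → M' are C-Lipschitz maps with sup_{x∈M} d(f₀(x), f₁(x)) ≤ ε, then f₀ and f₁ are (C̃, ε)-Lipschitz homotopic. -/
open Metric Set

/-- `h : X → ℝ → Y`, viewed as a map on `X × [0, ε]` with the L¹ product metric,
is `C`-Lipschitz. -/
def IsLipHtpyMap {X Y : Type*} [MetricSpace X] [MetricSpace Y] (C ε : ℝ)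
    (h : X → ℝ → Y) : Prop :=
  ∀ x x' : X, ∀ s ∈ Set.Icc (0 : ℝ) ε, ∀ s' ∈ Set.Icc (0 : ℝ) ε,
    dist (h x s) (h x' s') ≤ C * (dist x x' + |s - s'|)

/-- `f₀` and `f₁` are `(C, ε)`-Lipschitz homotopic. -/
def LipHomotopic {X Y : Type*} [MetricSpace X] [MetricSpace Y] (C ε : ℝ)
    (f₀ f₁ : X → Y) : Prop :=
  ∃ h : X → ℝ → Y, IsLipHtpyMap C ε h ∧ (∀ x, h x 0 = f₀ x) ∧ (∀ x, h x ε = f₁ x)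

/-- `U` is `(C, ε)`-Lipschitz strongly contractible (with some center `p ∈ U`). -/
def LipStronglyContractible {X : Type*} [MetricSpace X] (C ε : ℝ) (U : Set X) : Prop :=
  ∃ p ∈ U, ∃ φ : X → ℝ → X,
    (∀ x ∈ U, ∀ t ∈ Set.Icc (0 : ℝ) ε, φ x t ∈ U) ∧
    (∀ x ∈ U, ∀ x' ∈ U, ∀ s ∈ Set.Icc (0 : ℝ) ε, ∀ s' ∈ Set.Icc (0 : ℝ) ε,
      dist (φ x s) (φ x' s') ≤ C * (dist x x' + |s - s'|)) ∧
    (∀ x ∈ U, φ x 0 = x) ∧ (∀ x ∈ U, φ x ε = p) ∧ (∀ t ∈ Set.Icc (0 : ℝ) ε, φ p t = p)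

/-- `X` is locally `C`-Lipschitz contractible. -/
def LocallyLipContractible (X : Type*) [MetricSpace X] (C : ℝ) : Prop :=
  ∀ (p : X) (ε : ℝ), 0 < ε → ε < C⁻¹ →
    ∃ U : Set X, IsOpen U ∧ ball p ε ⊆ U ∧ LipStronglyContractible C ε U

/-- `X` is `C`-doubling. -/
def IsDoubling (X : Type*) [MetricSpace X] (C : ℝ) : Prop :=
  ∀ ε : ℝ, 0 < ε → ε < C⁻¹ → ∀ p : X,
    ∃ s : Finset X, (s.card : ℝ) ≤ C ∧ ball p ε ⊆ ⋃ q ∈ s, ball q (ε / 2)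

/-- `f : X → Y` is an `ε`-approximation. -/
def IsApprox {X Y : Type*} [MetricSpace X] [MetricSpace Y] (ε : ℝ) (f : X → Y) : Prop :=
  (∀ x x' : X, |dist (f x) (f x') - dist x x'| < ε) ∧ ∀ y : Y, ∃ x : X, dist (f x) y < ε

/-- `f` and `g` are `(C, ε)`-Lipschitz homotopy approximations between `X` and `Y`. -/
def LipHomotopyApprox {X Y : Type*} [MetricSpace X] [MetricSpace Y] (C ε : ℝ)
    (f : X → Y) (g : Y → X) : Prop :=
  (∀ x x' : X, dist (f x) (f x') ≤ C * dist x x') ∧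
  (∀ y y' : Y, dist (g y) (g y') ≤ C * dist y y') ∧
  IsApprox ε f ∧ IsApprox ε g ∧
  LipHomotopic C ε (g ∘ f) (id : X → X) ∧ LipHomotopic C ε (f ∘ g) (id : Y → Y)

set_option maxHeartbeats 2000000

namespace LipHtpyAux
set_option linter.unusedSectionVars false
set_option maxHeartbeats 1000000
set_option linter.unusedVariables false
attribute [local instance] Classical.propDecidable

noncomputable def cutoff (y : ℝ) : ℝ := max 0 (min 1 y)

lemma cutoff_nonneg (y : ℝ) : 0 ≤ cutoff y := le_max_left _ _

lemma cutoff_le_one (y : ℝ) : cutoff y ≤ 1 := by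
  unfold cutoff
  rcases le_total 1 y with h | h
  · simp [min_eq_left h]
  · rcases le_total 0 y with h0 | h0 <;> simp [min_eq_right h] <;> linarith

lemma cutoff_eq_one {y : ℝ} (h : 1 ≤ y) : cutoff y = 1 := by
  unfold cutoff; rw [min_eq_left h]; simp

lemma cutoff_le_of_le {y z : ℝ} (h : y ≤ z) (hz : 0 ≤ z) : cutoff y ≤ z := by
  unfold cutoff
  rcases le_total 1 y with h1 | h1
  · rw [min_eq_left h1]; simpa using le_trans h1 h
  · rw [min_eq_right h1]
    rcases le_total 0 y with h0 | h0
    · rw [max_eq_right h0]; exact h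
    · rw [max_eq_left h0]; exact hz

lemma cutoff_lip (a b : ℝ) : |cutoff a - cutoff b| ≤ |a - b| := by
  have h1 : LipschitzWith 1 (fun y : ℝ => min 1 y) := LipschitzWith.id.const_min 1
  have h2 : LipschitzWith 1 (fun y : ℝ => max 0 (min 1 y)) := h1.const_max 0
  have := h2.dist_le_mul a b
  simpa [Real.dist_eq, cutoff] using this

variable {M : Type*} [MetricSpace M]

/-- Maximal `ε`-separated net. -/
lemma exists_net (ε : ℝ) (hε : 0 < ε) :
    ∃ N : Set M, (∀ m ∈ N, ∀ n ∈ N, m ≠ n → ε ≤ dist m n) ∧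
      ∀ x : M, ∃ n ∈ N, dist x n < ε := by
  set S : Set (Set M) := {A | ∀ m ∈ A, ∀ n ∈ A, m ≠ n → ε ≤ dist m n} with hS
  have hchain : ∀ c ⊆ S, IsChain (fun x1 x2 => x1 ⊆ x2) c → ∃ ub ∈ S, ∀ s ∈ c, s ⊆ ub := by
    intro c hcS hchain
    refine ⟨⋃₀ c, ?_, fun s hs => Set.subset_sUnion_of_mem hs⟩
    intro m hm n hn hmn
    obtain ⟨A, hA, hmA⟩ := hm
    obtain ⟨B, hB, hnB⟩ := hn
    rcases hchain.total hA hB with h | h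
    · exact hcS hB m (h hmA) n hnB hmn
    · exact hcS hA m hmA n (h hnB) hmn
  obtain ⟨N, hN⟩ := zorn_subset S hchain
  · refine ⟨N, hN.prop, ?_⟩
    intro x
    by_contra hx
    push_neg at hx
    have hxN : x ∉ N := by
      intro h
      have := hx x h
      simp at this
      exact absurd this (not_le.mpr hε)
    have hins : insert x N ∈ S := by
      intro m hm n hn hmn
      rcases hm with rfl | hm
      · rcases hn with rfl | hn
        · exact absurd rfl hmn
        · exact hx n hn
      · rcases hn with rfl | hn
        · rw [dist_comm]; exact hx m hm
        · exact hN.prop m hm n hn hmn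
    exact hxN (hN.2 hins (Set.subset_insert x N) (Set.mem_insert x N))

/-- Iterated doubling. -/
lemma doubling_iter {C : ℝ} (hD : IsDoubling M C) (hC : 0 < C) (j : ℕ) :
    ∀ r : ℝ, 0 < r → r < C⁻¹ → ∀ p : M,
      ∃ s : Finset M, (s.card : ℝ) ≤ C ^ j ∧ ball p r ⊆ ⋃ q ∈ s, ball q (r / 2 ^ j) := by
  classical
  induction j with
  | zero =>
    intro r hr hrC p
    exact ⟨{p}, by simp, by simp⟩
  | succ j ih =>
    intro r hr hrC p
    obtain ⟨s, hcard, hcov⟩ := ih r hr hrC p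
    have h2j : (1:ℝ) ≤ 2 ^ j := one_le_pow₀ (by norm_num)
    have hr2 : 0 < r / 2 ^ j := by positivity
    have hr2C : r / 2 ^ j < C⁻¹ :=
      lt_of_le_of_lt (div_le_self hr.le h2j) hrC
    choose t ht1 ht2 using fun q : M => hD (r / 2 ^ j) hr2 hr2C q
    refine ⟨s.biUnion t, ?_, ?_⟩
    · calc ((s.biUnion t).card : ℝ) ≤ ∑ q ∈ s, ((t q).card : ℝ) := by
            exact_mod_cast Finset.card_biUnion_le
        _ ≤ ∑ _q ∈ s, C := Finset.sum_le_sum fun q _ => ht1 q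
        _ = s.card * C := by simp [mul_comm]
        _ ≤ C ^ j * C := mul_le_mul_of_nonneg_right hcard hC.le
        _ = C ^ (j + 1) := by ring
    · intro x hx
      obtain ⟨q, hq, hxq⟩ := by simpa using hcov hx
      obtain ⟨q', hq', hxq'⟩ := by simpa using ht2 q hxq
      simp only [Set.mem_iUnion, Finset.mem_biUnion]
      refine ⟨q', ⟨q, hq, hq'⟩, ?_⟩
      have heq : r / 2 ^ j / 2 = r / 2 ^ (j + 1) := by ring
      rwa [heq] at hxq'

lemma nbr_finset {C ε : ℝ} (hD : IsDoubling M C) (hC : 0 < C) (hε : 0 < ε)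
    (h9 : 9 * ε < C⁻¹) {N : Set M}
    (hsep : ∀ m ∈ N, ∀ n ∈ N, m ≠ n → ε ≤ dist m n) (n : M) :
    ∃ F : Finset M, (F.card : ℝ) ≤ C ^ 5 ∧ ∀ m ∈ N, dist m n < 9 * ε → m ∈ F := by
  classical
  obtain ⟨s, hcard, hcov⟩ := doubling_iter hD hC 5 (9*ε) (by positivity) h9 n
  set F : Finset M := s.biUnion
    (fun q => if h : (N ∩ ball q (9*ε/2^5)).Nonempty then {h.choose} else ∅) with hF
  refine ⟨F, ?_, ?_⟩
  · rw [hF]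
    calc ((s.biUnion (fun q => if h : (N ∩ ball q (9*ε/2^5)).Nonempty then ({h.choose} : Finset M) else ∅)).card : ℝ)
        ≤ ∑ q ∈ s, (((if h : (N ∩ ball q (9*ε/2^5)).Nonempty then ({h.choose} : Finset M)
            else ∅)).card : ℝ) := by exact_mod_cast Finset.card_biUnion_le
      _ ≤ ∑ _q ∈ s, 1 := Finset.sum_le_sum (by intro q _; split <;> simp)
      _ = s.card := by simp
      _ ≤ C ^ 5 := hcard
  · intro m hm hmn
    have hmball : m ∈ ball n (9*ε) := by simpa [mem_ball] using hmn
    obtain ⟨q, hq, hmq⟩ := by simpa using hcov hmball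
    have hne : (N ∩ ball q (9*ε/2^5)).Nonempty := ⟨m, hm, hmq⟩
    have hch := hne.choose_spec
    have hmc : m = hne.choose := by
      by_contra hne'
      have h1 := hsep m hm hne.choose hch.1 hne'
      have d1 : dist m q < 9*ε/2^5 := mem_ball.mp hmq
      have d2 : dist hne.choose q < 9*ε/2^5 := mem_ball.mp hch.2
      have : dist m hne.choose ≤ dist m q + dist hne.choose q := dist_triangle_right _ _ _
      nlinarith
    rw [hF]
    refine Finset.mem_biUnion.mpr ⟨q, hq, ?_⟩
    rw [dif_pos hne]
    simp [hmc]

/-- Greedy coloring of the net. -/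
lemma exists_coloring {ε : ℝ} (hε : 0 < ε) {N : Set M} (K : ℕ) (hK : 1 ≤ K)
    (hF : ∀ n ∈ N, ∃ F : Finset M, F.card ≤ K ∧ n ∈ F ∧ ∀ m ∈ N, dist m n < 9 * ε → m ∈ F) :
    ∃ col : M → ℕ, (∀ n ∈ N, col n < K) ∧
      ∀ m ∈ N, ∀ n ∈ N, m ≠ n → dist m n ≤ 8 * ε → col m ≠ col n := by
  classical
  have wf : WellFounded (WellOrderingRel : M → M → Prop) :=
    (IsWellFounded.wf : WellFounded (WellOrderingRel : M → M → Prop))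
  set col : M → ℕ := wf.fix (fun n ih => sInf {j | j < K ∧ ∀ m, ∀ hm : WellOrderingRel m n,
    m ∈ N → m ≠ n → dist m n ≤ 8 * ε → ih m hm ≠ j}) with hcol
  have hfix : ∀ n : M, col n = sInf {j | j < K ∧ ∀ m, WellOrderingRel m n →
      m ∈ N → m ≠ n → dist m n ≤ 8 * ε → col m ≠ j} := by
    intro n
    rw [hcol]
    rw [WellFounded.fix_eq]
  have hmem : ∀ n ∈ N, col n ∈ {j | j < K ∧ ∀ m, WellOrderingRel m n →
      m ∈ N → m ≠ n → dist m n ≤ 8 * ε → col m ≠ j} := by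
    intro n hn
    rw [hfix n]
    apply Nat.sInf_mem
    -- find a free color
    obtain ⟨F, hFcard, hnF, hFmem⟩ := hF n hn
    set Ex : Finset ℕ := (F.erase n).image col with hEx
    have hExcard : Ex.card < K := by
      calc Ex.card ≤ (F.erase n).card := Finset.card_image_le
        _ < F.card := Finset.card_erase_lt_of_mem hnF
        _ ≤ K := hFcard
    have : ¬ (Finset.range K ⊆ Ex) := by
      intro hsub
      have := Finset.card_le_card hsub
      simp at this
      omega
    obtain ⟨j, hjr, hjEx⟩ := Finset.not_subset.mp this
    refine ⟨j, Finset.mem_range.mp hjr, ?_⟩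
    intro m _ hmN hmn hd hcolm
    exact hjEx (Finset.mem_image.mpr ⟨m, Finset.mem_erase.mpr ⟨hmn,
      hFmem m hmN (lt_of_le_of_lt hd (by linarith))⟩, hcolm⟩)
  refine ⟨col, fun n hn => (hmem n hn).1, ?_⟩
  intro m hm n hn hmn hd
  rcases trichotomous_of (WellOrderingRel : M → M → Prop) m n with h | h | h
  · exact (hmem n hn).2 m h hm hmn hd
  · exact absurd h hmn
  · exact Ne.symm ((hmem m hm).2 n h hn (Ne.symm hmn) (by rwa [dist_comm]))

/-- Lipschitz constant after `k` stages. -/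
noncomputable def LLc (B R : ℝ) (K k : ℕ) : ℝ := (8 * B * R ^ (K + 1)) ^ (k + 1)

/-- Wander bound after `k` stages. -/
noncomputable def VVc (B R : ℝ) (k : ℕ) : ℝ := 5 * B * R ^ k

section Arith

variable {Bv Rv : ℝ} {Kv : ℕ}

lemma LLc_pos (hB : 1 ≤ Bv) (hR : 9 ≤ Rv) (k : ℕ) : 0 < LLc Bv Rv Kv k := by
  unfold LLc
  positivity

lemma LLc_mono (hB : 1 ≤ Bv) (hR : 9 ≤ Rv) {j k : ℕ} (h : j ≤ k) :
    LLc Bv Rv Kv j ≤ LLc Bv Rv Kv k := by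
  unfold LLc
  apply pow_le_pow_right₀
  · nlinarith [one_le_pow₀ (by linarith : (1:ℝ) ≤ Rv) (n := Kv+1)]
  · omega

lemma arith_W (hB : 1 ≤ Bv) (hR : Rv = 9 * Bv) {ε : ℝ} (hε : 0 < ε) (k : ℕ) :
    ε * VVc Bv Rv k + 4 * Bv * ε ≤ ε * Rv ^ (k + 1) := by
  unfold VVc
  have hR9 : 9 ≤ Rv := by rw [hR]; linarith
  have hRk : (1:ℝ) ≤ Rv ^ k := one_le_pow₀ (by linarith)
  have key : 5 * Bv * Rv ^ k + 4 * Bv ≤ Rv ^ (k+1) := by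
    have h9 : Rv ^ (k+1) = 9 * Bv * Rv ^ k := by rw [pow_succ, hR]; ring
    rw [h9]
    nlinarith [mul_nonneg (by linarith : (0:ℝ) ≤ 4*Bv) (by linarith : (0:ℝ) ≤ Rv ^ k - 1)]
  nlinarith [mul_nonneg hε.le (by linarith : (0:ℝ) ≤ Rv ^ (k+1) - (5*Bv*Rv^k + 4*Bv))]

lemma arith_V (hB : 1 ≤ Bv) (hR : Rv = 9 * Bv) {ε : ℝ} (hε : 0 < ε) (k : ℕ) :
    ε * VVc Bv Rv k + Bv * (ε * Rv ^ (k + 1)) ≤ ε * VVc Bv Rv (k + 1) := by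
  unfold VVc
  have hR9 : 9 ≤ Rv := by rw [hR]; linarith
  have hRk : (0:ℝ) < Rv ^ k := by positivity
  have key : 5 * Bv * Rv ^ k + Bv * Rv ^ (k+1) ≤ 5 * Bv * Rv ^ (k+1) := by
    rw [pow_succ]
    nlinarith [mul_nonneg (mul_nonneg hRk.le (by linarith : (0:ℝ) ≤ Bv))
      (by linarith : (0:ℝ) ≤ 4*Rv - 5)]
  nlinarith [mul_nonneg hε.le
    (by linarith : (0:ℝ) ≤ 5 * Bv * Rv ^ (k+1) - (5*Bv*Rv^k + Bv*Rv^(k+1)))]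

lemma arith_L (hB : 1 ≤ Bv) (hR : 9 ≤ Rv) {k : ℕ} (hk : k ≤ Kv) :
    4 * Bv * (LLc Bv Rv Kv k + Rv ^ (k + 1)) ≤ LLc Bv Rv Kv (k + 1) := by
  have h1 : (1:ℝ) ≤ 8 * Bv * Rv ^ (Kv+1) := by
    nlinarith [one_le_pow₀ (by linarith : (1:ℝ) ≤ Rv) (n := Kv+1)]
  have h2 : Rv ^ (k+1) ≤ Rv ^ (Kv+1) := pow_le_pow_right₀ (by linarith) (by omega)
  have h3 : Rv ^ (Kv+1) ≤ LLc Bv Rv Kv k := by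
    calc Rv ^ (Kv+1) ≤ 8 * Bv * Rv ^ (Kv+1) := by
          nlinarith [pow_pos (by linarith : (0:ℝ) < Rv) (Kv+1)]
      _ ≤ (8 * Bv * Rv ^ (Kv+1)) ^ (k+1) := le_self_pow₀ h1 (by omega)
  have h4 : LLc Bv Rv Kv (k+1) = LLc Bv Rv Kv k * (8 * Bv * Rv ^ (Kv+1)) := by
    unfold LLc
    rw [← pow_succ]
  have h5 : 0 < LLc Bv Rv Kv k := LLc_pos hB hR k
  rw [h4]
  have h6 : 4*Bv*Rv^(k+1) ≤ 4*Bv*LLc Bv Rv Kv k :=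
    mul_le_mul_of_nonneg_left (h2.trans h3) (by linarith)
  have h7 : (0:ℝ) ≤ 8*Bv*LLc Bv Rv Kv k*(Rv^(Kv+1)-1) := by
    have := one_le_pow₀ (by linarith : (1:ℝ) ≤ Rv) (n := Kv+1)
    have h8 : (0:ℝ) ≤ 8*Bv*LLc Bv Rv Kv k := by nlinarith
    nlinarith
  nlinarith

end Arith

section Core

variable {M M' : Type*} [MetricSpace M] [MetricSpace M']

/-- Properties of the net and its coloring. -/
def NetOK (ε : ℝ) (N : Set M) (col : M → ℕ) (K : ℕ) : Prop :=
  (∀ m ∈ N, ∀ n ∈ N, m ≠ n → ε ≤ dist m n) ∧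
  (∀ x : M, ∃ n ∈ N, dist x n < ε) ∧
  (∀ n : M, col n < K) ∧
  (∀ m ∈ N, ∀ n ∈ N, m ≠ n → dist m n ≤ 8 * ε → col m ≠ col n)

/-- Properties of the chosen local contractions in the target. -/
def PhiOK (B : ℝ) (f₀ : M → M') (sc : M → ℝ) (φ : M → M' → ℝ → M') (q : M → M') : Prop :=
  ∀ n : M,
    (∀ y y' s s', dist y (f₀ n) < sc n → dist y' (f₀ n) < sc n →
      0 ≤ s → s ≤ sc n → 0 ≤ s' → s' ≤ sc n →
      dist (φ n y s) (φ n y' s') ≤ B * (dist y y' + |s - s'|)) ∧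
    (∀ y, dist y (f₀ n) < sc n → φ n y 0 = y) ∧
    (∀ y, dist y (f₀ n) < sc n → φ n y (sc n) = q n)

/-- One stage of the homotopy: partially contract inside all balls of color `k`. -/
noncomputable def stage (ε : ℝ) (N : Set M) (col : M → ℕ) (sc : M → ℝ)
    (φ : M → M' → ℝ → M') (g : M → M') (k : ℕ) (x : M) (u : ℝ) : M' :=
  if h : ∃ n, n ∈ N ∧ col n = k ∧ dist x n < 4 * ε then
    φ h.choose (g x) (sc h.choose * cutoff ((4 * ε - dist x h.choose) / ε) * u)
  else g x

/-- The discrete flow: result of the first `k` stages. -/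
noncomputable def flowN (ε : ℝ) (N : Set M) (col : M → ℕ) (sc : M → ℝ)
    (φ : M → M' → ℝ → M') : ℕ → (M → M') → M → M'
  | 0, g => g
  | (k+1), g => fun x => stage ε N col sc φ (flowN ε N col sc φ k g) k x 1

variable (ε B R : ℝ) (K : ℕ) (N : Set M) (col : M → ℕ) (sc : M → ℝ)
  (f₀ : M → M') (φ : M → M' → ℝ → M') (q : M → M')
variable (hε : 0 < ε) (hB : 1 ≤ B) (hR : R = 9 * B)
  (hnet : NetOK ε N col K) (hphi : PhiOK B f₀ sc φ q)
  (hsc : ∀ n, sc n = ε * R ^ (col n + 1))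
  (hf₀ : ∀ x x', dist (f₀ x) (f₀ x') ≤ B * dist x x')

section Basic

include hB hR

lemma R_ge_nine : 9 ≤ R := by rw [hR]; linarith

lemma R_ge_one : 1 ≤ R := by rw [hR]; linarith

include hε hsc

lemma sc_pos (n : M) : 0 < sc n := by
  rw [hsc n]
  have h1 : (1:ℝ) ≤ R := by rw [hR]; linarith
  positivity

end Basic

include hε hB hR hnet hphi hsc hf₀

lemma move_le (n : M) (y : M') (hy : dist y (f₀ n) < sc n) {s : ℝ}
    (hs0 : 0 ≤ s) (hs1 : s ≤ sc n) : dist (φ n y s) y ≤ B * s := by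
  have hsc0 : 0 ≤ sc n := (sc_pos ε B R col sc hε hB hR hsc n).le
  have h := (hphi n).1 y y s 0 hy hy hs0 hs1 le_rfl hsc0
  rw [(hphi n).2.1 y hy] at h
  simpa [abs_of_nonneg hs0] using h

lemma val_mem {k : ℕ} {g : M → M'} {Wg : ℝ}
    (hg2 : ∀ z, dist (g z) (f₀ z) ≤ Wg) (hW : Wg + 4 * B * ε ≤ ε * R ^ (k + 1))
    {n : M} (hcn : col n = k) {x : M} (hx : dist x n < 4 * ε) :
    dist (g x) (f₀ n) < sc n := by
  have h1 := hg2 x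
  have h2 : dist (f₀ x) (f₀ n) ≤ B * dist x n := hf₀ x n
  have hB0 : (0:ℝ) < B := by linarith
  have h3 : B * dist x n < B * (4 * ε) := by
    exact mul_lt_mul_of_pos_left hx hB0
  have h4 := dist_triangle (g x) (f₀ x) (f₀ n)
  rw [hsc n, hcn]
  nlinarith

lemma ball_unique {k : ℕ} {n n' : M} (hn : n ∈ N) (hn' : n' ∈ N)
    (hcn : col n = k) (hcn' : col n' = k) {x : M}
    (hx : dist x n < 4 * ε) (hx' : dist x n' < 4 * ε) : n = n' := by
  by_contra hne
  have hd : dist n n' ≤ 8 * ε := by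
    have := dist_triangle n x n'
    rw [dist_comm n x] at this
    linarith
  exact hnet.2.2.2 n hn n' hn' hne hd (hcn.trans hcn'.symm)

lemma far_of_ne {k : ℕ} {n n' : M} (hn : n ∈ N) (hn' : n' ∈ N)
    (hcn : col n = k) (hcn' : col n' = k) (hne : n ≠ n') {x' : M}
    (hx' : dist x' n' < 4 * ε) : 4 * ε ≤ dist x' n := by
  by_contra h
  push_neg at h
  exact hne (ball_unique ε B R K N col sc f₀ φ q hε hB hR hnet hphi hsc hf₀
    hn hn' hcn hcn' h hx')

lemma tau_mem (n : M) (x : M) (u : ℝ) (hu0 : 0 ≤ u) (hu1 : u ≤ 1) :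
    0 ≤ sc n * cutoff ((4 * ε - dist x n) / ε) * u ∧
      sc n * cutoff ((4 * ε - dist x n) / ε) * u ≤ sc n := by
  have hs0 : 0 < sc n := sc_pos (hε := hε) (hB := hB) (hR := hR) (hsc := hsc) (n := n)
  have hc0 := cutoff_nonneg ((4 * ε - dist x n) / ε)
  have hc1 := cutoff_le_one ((4 * ε - dist x n) / ε)
  constructor
  · positivity
  · have h1 : cutoff ((4 * ε - dist x n) / ε) * u ≤ 1 := by nlinarith
    nlinarith

lemma phi_pair (k : ℕ) (g : M → M') (Lg Wg : ℝ) (hLg0 : 0 ≤ Lg)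
    (hg1 : ∀ z z', dist (g z) (g z') ≤ Lg * dist z z')
    (hg2 : ∀ z, dist (g z) (f₀ z) ≤ Wg)
    (hW : Wg + 4 * B * ε ≤ ε * R ^ (k + 1))
    (n : M) (hcn : col n = k) (x x' : M) (u u' : ℝ)
    (hu0 : 0 ≤ u) (hu1 : u ≤ 1) (hu'0 : 0 ≤ u') (hu'1 : u' ≤ 1)
    (hxn : dist x n < 4 * ε) (hx'n : dist x' n < 4 * ε) :
    dist (φ n (g x) (sc n * cutoff ((4 * ε - dist x n) / ε) * u))
        (φ n (g x') (sc n * cutoff ((4 * ε - dist x' n) / ε) * u'))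
      ≤ B * (Lg + R ^ (k + 1)) * dist x x' + B * ε * R ^ (k + 1) * |u - u'| := by
  have hR1 : (1:ℝ) ≤ R := R_ge_one (hB := hB) (hR := hR)
  have hRk1 : (1:ℝ) ≤ R ^ (k+1) := one_le_pow₀ hR1
  have hRk0 : (0:ℝ) ≤ R ^ (k+1) := by linarith
  have hB0 : (0:ℝ) < B := by linarith
  have hd0 : 0 ≤ dist x x' := dist_nonneg
  have habs0 : 0 ≤ |u - u'| := abs_nonneg _
  have hsx : sc n = ε * R ^ (k+1) := by rw [hsc, hcn]
  have hs0 : 0 ≤ sc n := by rw [hsx]; positivity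
  have hmx : dist (g x) (f₀ n) < sc n :=
    val_mem (hε := hε) (hB := hB) (hR := hR) (hnet := hnet) (hphi := hphi) (hsc := hsc)
      (hf₀ := hf₀) (hg2 := hg2) (hW := hW) (hcn := hcn) (hx := hxn)
  have hmx' : dist (g x') (f₀ n) < sc n :=
    val_mem (hε := hε) (hB := hB) (hR := hR) (hnet := hnet) (hphi := hphi) (hsc := hsc)
      (hf₀ := hf₀) (hg2 := hg2) (hW := hW) (hcn := hcn) (hx := hx'n)
  have hτ := tau_mem (hε := hε) (hB := hB) (hR := hR) (hnet := hnet) (hphi := hphi)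
    (hsc := hsc) (hf₀ := hf₀) (n := n) (x := x) (u := u) (hu0 := hu0) (hu1 := hu1)
  have hτ' := tau_mem (hε := hε) (hB := hB) (hR := hR) (hnet := hnet) (hphi := hphi)
    (hsc := hsc) (hf₀ := hf₀) (n := n) (x := x') (u := u') (hu0 := hu'0) (hu1 := hu'1)
  have happ := (hphi n).1 (g x) (g x') _ _ hmx hmx' hτ.1 hτ.2 hτ'.1 hτ'.2
  refine happ.trans ?_
  set ca := cutoff ((4 * ε - dist x n) / ε) with hca
  set ca' := cutoff ((4 * ε - dist x' n) / ε) with hca'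
  have hc0 : 0 ≤ ca := cutoff_nonneg _
  have hc1 : ca ≤ 1 := cutoff_le_one _
  have hc'0 : 0 ≤ ca' := cutoff_nonneg _
  have hc'1 : ca' ≤ 1 := cutoff_le_one _
  have hcl : |ca - ca'| ≤ dist x x' / ε := by
    refine le_trans (cutoff_lip _ _) ?_
    have harg : (4 * ε - dist x n) / ε - (4 * ε - dist x' n) / ε
        = (dist x' n - dist x n) / ε := by ring
    rw [harg, abs_div, abs_of_pos hε]
    have habs : |dist x' n - dist x n| ≤ dist x x' := by
      rw [dist_comm x x']
      exact abs_dist_sub_le x' x n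
    gcongr
  have hτd : |sc n * ca * u - sc n * ca' * u'|
      ≤ R ^ (k+1) * dist x x' + ε * R ^ (k+1) * |u - u'| := by
    have h1 : sc n * ca * u - sc n * ca' * u'
        = sc n * ((ca - ca') * u) + sc n * (ca' * (u - u')) := by ring
    rw [h1]
    refine (abs_add_le _ _).trans ?_
    have e1 : |sc n * ((ca - ca') * u)| ≤ R ^ (k+1) * dist x x' := by
      rw [abs_mul, abs_mul, abs_of_nonneg hs0, abs_of_nonneg hu0]
      have : |ca - ca'| * u ≤ dist x x' / ε := by nlinarith [abs_nonneg (ca - ca')]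
      calc sc n * (|ca - ca'| * u) ≤ sc n * (dist x x' / ε) := by nlinarith
        _ = R ^ (k+1) * dist x x' := by rw [hsx]; field_simp
    have e2 : |sc n * (ca' * (u - u'))| ≤ ε * R ^ (k+1) * |u - u'| := by
      rw [abs_mul, abs_mul, abs_of_nonneg hs0, abs_of_nonneg hc'0]
      calc sc n * (ca' * |u - u'|) ≤ sc n * |u - u'| := by
            nlinarith [mul_nonneg (mul_nonneg hs0 (sub_nonneg.mpr hc'1)) habs0]
        _ = ε * R ^ (k+1) * |u - u'| := by rw [hsx]
    linarith
  have hglip := hg1 x x'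
  calc B * (dist (g x) (g x') + |sc n * ca * u - sc n * ca' * u'|)
      ≤ B * ((Lg * dist x x') + (R ^ (k+1) * dist x x' + ε * R ^ (k+1) * |u - u'|)) := by
        apply mul_le_mul_of_nonneg_left _ hB0.le
        exact add_le_add hglip hτd
    _ = B * (Lg + R ^ (k+1)) * dist x x' + B * ε * R ^ (k+1) * |u - u'| := by ring

lemma tau_far (k : ℕ) (n : M) (hcn : col n = k) (x x' : M) (u : ℝ)
    (hu0 : 0 ≤ u) (hu1 : u ≤ 1) (hfar : 4 * ε ≤ dist x' n) :
    sc n * cutoff ((4 * ε - dist x n) / ε) * u ≤ R ^ (k + 1) * dist x x' := by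
  have hsx : sc n = ε * R ^ (k+1) := by rw [hsc, hcn]
  have hR1 : (1:ℝ) ≤ R := R_ge_one (hB := hB) (hR := hR)
  have hRk1 : (1:ℝ) ≤ R ^ (k+1) := one_le_pow₀ hR1
  have hd0 : 0 ≤ dist x x' := dist_nonneg
  have hs0 : 0 ≤ sc n := by rw [hsx]; positivity
  have h1 : (4 * ε - dist x n) / ε ≤ dist x x' / ε := by
    have : dist x' n ≤ dist x' x + dist x n := dist_triangle x' x n
    rw [dist_comm x' x] at this
    gcongr
    linarith
  have h2 : cutoff ((4 * ε - dist x n) / ε) ≤ dist x x' / ε :=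
    cutoff_le_of_le h1 (by positivity)
  have hc0 := cutoff_nonneg ((4 * ε - dist x n) / ε)
  calc sc n * cutoff ((4 * ε - dist x n) / ε) * u
      ≤ sc n * cutoff ((4 * ε - dist x n) / ε) * 1 := by
        apply mul_le_mul_of_nonneg_left hu1 (by positivity)
    _ = sc n * cutoff ((4 * ε - dist x n) / ε) := mul_one _
    _ ≤ sc n * (dist x x' / ε) := by apply mul_le_mul_of_nonneg_left h2 hs0
    _ = R ^ (k+1) * dist x x' := by rw [hsx]; field_simp

lemma stage_lip (k : ℕ) (g : M → M') (Lg Wg : ℝ) (hLg0 : 0 ≤ Lg)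
    (hg1 : ∀ z z', dist (g z) (g z') ≤ Lg * dist z z')
    (hg2 : ∀ z, dist (g z) (f₀ z) ≤ Wg)
    (hW : Wg + 4 * B * ε ≤ ε * R ^ (k + 1))
    (x x' : M) (u u' : ℝ) (hu0 : 0 ≤ u) (hu1 : u ≤ 1) (hu'0 : 0 ≤ u') (hu'1 : u' ≤ 1) :
    dist (stage ε N col sc φ g k x u) (stage ε N col sc φ g k x' u')
      ≤ 4 * B * (Lg + R ^ (k + 1)) * dist x x' + B * ε * R ^ (k + 1) * |u - u'| := by
  have hR1 : (1:ℝ) ≤ R := R_ge_one (hB := hB) (hR := hR)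
  have hRk1 : (1:ℝ) ≤ R ^ (k+1) := one_le_pow₀ hR1
  have hRk0 : (0:ℝ) ≤ R ^ (k+1) := by linarith
  have hB0 : (0:ℝ) < B := by linarith
  have hd0 : 0 ≤ dist x x' := dist_nonneg
  have habs0 : 0 ≤ |u - u'| := abs_nonneg _
  have htime0 : 0 ≤ B * ε * R ^ (k+1) * |u - u'| := by positivity
  simp only [stage]
  by_cases hx : ∃ n, n ∈ N ∧ col n = k ∧ dist x n < 4 * ε
  · obtain ⟨hnN, hcn, hxn⟩ := hx.choose_spec
    have hmx : dist (g x) (f₀ hx.choose) < sc hx.choose :=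
      val_mem (hε := hε) (hB := hB) (hR := hR) (hnet := hnet) (hphi := hphi) (hsc := hsc)
        (hf₀ := hf₀) (hg2 := hg2) (hW := hW) (hcn := hcn) (hx := hxn)
    have hτm := tau_mem (hε := hε) (hB := hB) (hR := hR) (hnet := hnet) (hphi := hphi)
      (hsc := hsc) (hf₀ := hf₀) (n := hx.choose) (x := x) (u := u) (hu0 := hu0) (hu1 := hu1)
    have hmv : dist (φ hx.choose (g x)
        (sc hx.choose * cutoff ((4 * ε - dist x hx.choose) / ε) * u)) (g x)
        ≤ B * (sc hx.choose * cutoff ((4 * ε - dist x hx.choose) / ε) * u) :=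
      move_le (hε := hε) (hB := hB) (hR := hR) (hnet := hnet) (hphi := hphi) (hsc := hsc)
        (hf₀ := hf₀) (n := hx.choose) (y := g x) (hy := hmx) (hs0 := hτm.1) (hs1 := hτm.2)
    rw [dif_pos hx]
    by_cases hx' : ∃ n, n ∈ N ∧ col n = k ∧ dist x' n < 4 * ε
    · obtain ⟨hn'N, hcn', hx'n⟩ := hx'.choose_spec
      rw [dif_pos hx']
      by_cases heq : hx.choose = hx'.choose
      · rw [← heq] at hx'n
        rw [← heq]
        have hpp := phi_pair (hε := hε) (hB := hB) (hR := hR) (hnet := hnet) (hphi := hphi)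
          (hsc := hsc) (hf₀ := hf₀) (k := k) (g := g) (Lg := Lg) (Wg := Wg) (hLg0 := hLg0) (hg1 := hg1) (hg2 := hg2) (hW := hW)
          (n := hx.choose) (hcn := hcn) (x := x) (x' := x') (u := u) (u' := u')
          (hu0 := hu0) (hu1 := hu1) (hu'0 := hu'0) (hu'1 := hu'1)
          (hxn := hxn) (hx'n := hx'n)
        refine hpp.trans ?_
        have h3 : 0 ≤ 3 * (B * (Lg + R ^ (k+1)) * dist x x') := by positivity
        nlinarith
      · have hfar' : 4 * ε ≤ dist x' hx.choose :=
          far_of_ne (hε := hε) (hB := hB) (hR := hR) (hnet := hnet) (hphi := hphi)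
            (hsc := hsc) (hf₀ := hf₀) (hn := hnN) (hn' := hn'N) (hcn := hcn) (hcn' := hcn')
            (hne := heq) (hx' := hx'n)
        have hfar : 4 * ε ≤ dist x hx'.choose :=
          far_of_ne (hε := hε) (hB := hB) (hR := hR) (hnet := hnet) (hphi := hphi)
            (hsc := hsc) (hf₀ := hf₀) (hn := hn'N) (hn' := hnN) (hcn := hcn') (hcn' := hcn)
            (hne := Ne.symm heq) (hx' := hxn)
        have hmx' : dist (g x') (f₀ hx'.choose) < sc hx'.choose :=
          val_mem (hε := hε) (hB := hB) (hR := hR) (hnet := hnet) (hphi := hphi) (hsc := hsc)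
            (hf₀ := hf₀) (hg2 := hg2) (hW := hW) (hcn := hcn') (hx := hx'n)
        have hτm' := tau_mem (hε := hε) (hB := hB) (hR := hR) (hnet := hnet) (hphi := hphi)
          (hsc := hsc) (hf₀ := hf₀) (n := hx'.choose) (x := x') (u := u')
          (hu0 := hu'0) (hu1 := hu'1)
        have hmv' : dist (φ hx'.choose (g x')
            (sc hx'.choose * cutoff ((4 * ε - dist x' hx'.choose) / ε) * u')) (g x')
            ≤ B * (sc hx'.choose * cutoff ((4 * ε - dist x' hx'.choose) / ε) * u') :=
          move_le (hε := hε) (hB := hB) (hR := hR) (hnet := hnet) (hphi := hphi) (hsc := hsc)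
            (hf₀ := hf₀) (n := hx'.choose) (y := g x') (hy := hmx') (hs0 := hτm'.1)
            (hs1 := hτm'.2)
        have hτf : sc hx.choose * cutoff ((4 * ε - dist x hx.choose) / ε) * u
            ≤ R ^ (k+1) * dist x x' :=
          tau_far (hε := hε) (hB := hB) (hR := hR) (hnet := hnet) (hphi := hphi) (hsc := hsc)
            (hf₀ := hf₀) (k := k) (n := hx.choose) (hcn := hcn) (x := x) (x' := x') (u := u) (hu0 := hu0) (hu1 := hu1)
            (hfar := hfar')
        have hτf' : sc hx'.choose * cutoff ((4 * ε - dist x' hx'.choose) / ε) * u'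
            ≤ R ^ (k+1) * dist x' x :=
          tau_far (hε := hε) (hB := hB) (hR := hR) (hnet := hnet) (hphi := hphi) (hsc := hsc)
            (hf₀ := hf₀) (k := k) (n := hx'.choose) (hcn := hcn') (x := x') (x' := x) (u := u') (hu0 := hu'0)
            (hu1 := hu'1) (hfar := hfar)
        rw [dist_comm x' x] at hτf'
        have htri := dist_triangle4 (φ hx.choose (g x)
            (sc hx.choose * cutoff ((4 * ε - dist x hx.choose) / ε) * u)) (g x) (g x')
          (φ hx'.choose (g x') (sc hx'.choose * cutoff ((4 * ε - dist x' hx'.choose) / ε) * u'))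
        have hglip := hg1 x x'
        rw [dist_comm (g x') (φ hx'.choose (g x')
          (sc hx'.choose * cutoff ((4 * ε - dist x' hx'.choose) / ε) * u'))] at htri
        refine htri.trans ?_
        have e1 : dist (φ hx.choose (g x)
            (sc hx.choose * cutoff ((4 * ε - dist x hx.choose) / ε) * u)) (g x)
            ≤ B * (R ^ (k+1) * dist x x') :=
          hmv.trans (by apply mul_le_mul_of_nonneg_left hτf hB0.le)
        have e2 : dist (φ hx'.choose (g x')
            (sc hx'.choose * cutoff ((4 * ε - dist x' hx'.choose) / ε) * u')) (g x')
            ≤ B * (R ^ (k+1) * dist x x') :=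
          hmv'.trans (by apply mul_le_mul_of_nonneg_left hτf' hB0.le)
        nlinarith [mul_nonneg (mul_nonneg (by linarith : (0:ℝ) ≤ 4*B-1) hLg0) hd0,
          mul_nonneg (mul_nonneg hB0.le hRk0) hd0]
    · rw [dif_neg hx']
      have hfar' : 4 * ε ≤ dist x' hx.choose := by
        by_contra h
        push_neg at h
        exact hx' ⟨hx.choose, hnN, hcn, h⟩
      have hτf : sc hx.choose * cutoff ((4 * ε - dist x hx.choose) / ε) * u
          ≤ R ^ (k+1) * dist x x' :=
        tau_far (hε := hε) (hB := hB) (hR := hR) (hnet := hnet) (hphi := hphi) (hsc := hsc)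
          (hf₀ := hf₀) (k := k) (n := hx.choose) (hcn := hcn) (x := x) (x' := x') (u := u) (hu0 := hu0) (hu1 := hu1)
          (hfar := hfar')
      have htri := dist_triangle (φ hx.choose (g x)
          (sc hx.choose * cutoff ((4 * ε - dist x hx.choose) / ε) * u)) (g x) (g x')
      refine htri.trans ?_
      have hglip := hg1 x x'
      have e1 : dist (φ hx.choose (g x)
          (sc hx.choose * cutoff ((4 * ε - dist x hx.choose) / ε) * u)) (g x)
          ≤ B * (R ^ (k+1) * dist x x') :=
        hmv.trans (by apply mul_le_mul_of_nonneg_left hτf hB0.le)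
      nlinarith [mul_nonneg (mul_nonneg (by linarith : (0:ℝ) ≤ 4*B-1) hLg0) hd0,
        mul_nonneg (mul_nonneg hB0.le hRk0) hd0]
  · rw [dif_neg hx]
    by_cases hx' : ∃ n, n ∈ N ∧ col n = k ∧ dist x' n < 4 * ε
    · obtain ⟨hn'N, hcn', hx'n⟩ := hx'.choose_spec
      rw [dif_pos hx']
      have hfar : 4 * ε ≤ dist x hx'.choose := by
        by_contra h
        push_neg at h
        exact hx ⟨hx'.choose, hn'N, hcn', h⟩
      have hmx' : dist (g x') (f₀ hx'.choose) < sc hx'.choose :=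
        val_mem (hε := hε) (hB := hB) (hR := hR) (hnet := hnet) (hphi := hphi) (hsc := hsc)
          (hf₀ := hf₀) (hg2 := hg2) (hW := hW) (hcn := hcn') (hx := hx'n)
      have hτm' := tau_mem (hε := hε) (hB := hB) (hR := hR) (hnet := hnet) (hphi := hphi)
        (hsc := hsc) (hf₀ := hf₀) (n := hx'.choose) (x := x') (u := u')
        (hu0 := hu'0) (hu1 := hu'1)
      have hmv' : dist (φ hx'.choose (g x')
          (sc hx'.choose * cutoff ((4 * ε - dist x' hx'.choose) / ε) * u')) (g x')
          ≤ B * (sc hx'.choose * cutoff ((4 * ε - dist x' hx'.choose) / ε) * u') :=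
        move_le (hε := hε) (hB := hB) (hR := hR) (hnet := hnet) (hphi := hphi) (hsc := hsc)
          (hf₀ := hf₀) (n := hx'.choose) (y := g x') (hy := hmx') (hs0 := hτm'.1)
          (hs1 := hτm'.2)
      have hτf' : sc hx'.choose * cutoff ((4 * ε - dist x' hx'.choose) / ε) * u'
          ≤ R ^ (k+1) * dist x' x :=
        tau_far (hε := hε) (hB := hB) (hR := hR) (hnet := hnet) (hphi := hphi) (hsc := hsc)
          (hf₀ := hf₀) (k := k) (n := hx'.choose) (hcn := hcn') (x := x') (x' := x) (u := u') (hu0 := hu'0)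
          (hu1 := hu'1) (hfar := hfar)
      rw [dist_comm x' x] at hτf'
      have htri := dist_triangle (g x) (g x') (φ hx'.choose (g x')
          (sc hx'.choose * cutoff ((4 * ε - dist x' hx'.choose) / ε) * u'))
      refine htri.trans ?_
      have hglip := hg1 x x'
      rw [dist_comm (g x') (φ hx'.choose (g x')
        (sc hx'.choose * cutoff ((4 * ε - dist x' hx'.choose) / ε) * u'))] at htri
      have e2 : dist (φ hx'.choose (g x')
          (sc hx'.choose * cutoff ((4 * ε - dist x' hx'.choose) / ε) * u')) (g x')
          ≤ B * (R ^ (k+1) * dist x x') :=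
        hmv'.trans (by apply mul_le_mul_of_nonneg_left hτf' hB0.le)
      rw [dist_comm (g x') (φ hx'.choose (g x')
        (sc hx'.choose * cutoff ((4 * ε - dist x' hx'.choose) / ε) * u'))]
      nlinarith [mul_nonneg (mul_nonneg (by linarith : (0:ℝ) ≤ 4*B-1) hLg0) hd0,
        mul_nonneg (mul_nonneg hB0.le hRk0) hd0]
    · rw [dif_neg hx']
      refine (hg1 x x').trans ?_
      nlinarith [mul_nonneg (mul_nonneg (by linarith : (0:ℝ) ≤ 4*B-1) hLg0) hd0,
        mul_nonneg (mul_nonneg hB0.le hRk0) hd0]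

lemma stage_zero (k : ℕ) (g : M → M') (Wg : ℝ)
    (hg2 : ∀ z, dist (g z) (f₀ z) ≤ Wg)
    (hW : Wg + 4 * B * ε ≤ ε * R ^ (k + 1)) (x : M) :
    stage ε N col sc φ g k x 0 = g x := by
  simp only [stage]
  by_cases hx : ∃ n, n ∈ N ∧ col n = k ∧ dist x n < 4 * ε
  · obtain ⟨hnN, hcn, hxn⟩ := hx.choose_spec
    rw [dif_pos hx, mul_zero]
    exact (hphi hx.choose).2.1 (g x)
      (val_mem (hε := hε) (hB := hB) (hR := hR) (hnet := hnet) (hphi := hphi) (hsc := hsc)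
        (hf₀ := hf₀) (hg2 := hg2) (hW := hW) (hcn := hcn) (hx := hxn))
  · rw [dif_neg hx]

lemma stage_move (k : ℕ) (g : M → M') (Wg : ℝ)
    (hg2 : ∀ z, dist (g z) (f₀ z) ≤ Wg)
    (hW : Wg + 4 * B * ε ≤ ε * R ^ (k + 1)) (x : M) (u : ℝ)
    (hu0 : 0 ≤ u) (hu1 : u ≤ 1) :
    dist (stage ε N col sc φ g k x u) (g x) ≤ B * (ε * R ^ (k + 1)) := by
  have hR1 : (1:ℝ) ≤ R := R_ge_one (hB := hB) (hR := hR)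
  have hRk1 : (1:ℝ) ≤ R ^ (k+1) := one_le_pow₀ hR1
  have hB0 : (0:ℝ) < B := by linarith
  simp only [stage]
  by_cases hx : ∃ n, n ∈ N ∧ col n = k ∧ dist x n < 4 * ε
  · obtain ⟨hnN, hcn, hxn⟩ := hx.choose_spec
    have hmx : dist (g x) (f₀ hx.choose) < sc hx.choose :=
      val_mem (hε := hε) (hB := hB) (hR := hR) (hnet := hnet) (hphi := hphi) (hsc := hsc)
        (hf₀ := hf₀) (hg2 := hg2) (hW := hW) (hcn := hcn) (hx := hxn)
    have hτm := tau_mem (hε := hε) (hB := hB) (hR := hR) (hnet := hnet) (hphi := hphi)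
      (hsc := hsc) (hf₀ := hf₀) (n := hx.choose) (x := x) (u := u) (hu0 := hu0) (hu1 := hu1)
    have hmv := move_le (hε := hε) (hB := hB) (hR := hR) (hnet := hnet) (hphi := hphi)
      (hsc := hsc) (hf₀ := hf₀) (n := hx.choose) (y := g x) (hy := hmx) (hs0 := hτm.1)
      (hs1 := hτm.2)
    rw [dif_pos hx]
    refine hmv.trans ?_
    have hsx : sc hx.choose = ε * R ^ (k+1) := by rw [hsc, hcn]
    rw [← hsx]
    exact mul_le_mul_of_nonneg_left hτm.2 hB0.le
  · rw [dif_neg hx]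
    simp
    positivity

lemma stage_center (k : ℕ) (g : M → M') (Wg : ℝ)
    (hg2 : ∀ z, dist (g z) (f₀ z) ≤ Wg)
    (hW : Wg + 4 * B * ε ≤ ε * R ^ (k + 1)) {n : M} (hn : n ∈ N) (hcn : col n = k)
    {x : M} (hx3 : dist x n ≤ 3 * ε) :
    stage ε N col sc φ g k x 1 = q n := by
  have hx4 : dist x n < 4 * ε := lt_of_le_of_lt hx3 (by linarith)
  have hex : ∃ m, m ∈ N ∧ col m = k ∧ dist x m < 4 * ε := ⟨n, hn, hcn, hx4⟩
  simp only [stage]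
  rw [dif_pos hex]
  obtain ⟨hmN, hcm, hxm⟩ := hex.choose_spec
  have hchn : hex.choose = n :=
    ball_unique (hε := hε) (hB := hB) (hR := hR) (hnet := hnet) (hphi := hphi) (hsc := hsc)
      (hf₀ := hf₀) (hn := hmN) (hn' := hn) (hcn := hcm) (hcn' := hcn) (hx := hxm) (hx' := hx4)
  rw [hchn]
  have hcut : cutoff ((4 * ε - dist x n) / ε) = 1 := by
    apply cutoff_eq_one
    rw [le_div_iff₀ hε]
    linarith
  rw [hcut, mul_one, mul_one]
  exact (hphi n).2.2 (g x)
    (val_mem (hε := hε) (hB := hB) (hR := hR) (hnet := hnet) (hphi := hphi) (hsc := hsc)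
      (hf₀ := hf₀) (hg2 := hg2) (hW := hW) (hcn := hcn) (hx := hx4))

omit hε hB hR hnet hphi hsc hf₀ in
lemma stage_congr (k : ℕ) (g g' : M → M') (x : M) (u : ℝ) (h : g x = g' x) :
    stage ε N col sc φ g k x u = stage ε N col sc φ g' k x u := by
  simp only [stage]
  split
  · rw [h]
  · rw [h]



include hε hB hR hnet hphi hsc hf₀

lemma flow_wander (k : ℕ) (g : M → M') (hg0 : ∀ z, dist (g z) (f₀ z) ≤ ε) :
    ∀ x, dist (flowN ε N col sc φ k g x) (f₀ x) ≤ ε * VVc B R k := by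
  induction k with
  | zero =>
    intro x
    simp only [flowN, VVc]
    calc dist (g x) (f₀ x) ≤ ε := hg0 x
      _ ≤ ε * (5 * B * R ^ 0) := by
          simp only [pow_zero, mul_one]
          nlinarith [mul_nonneg hε.le (by linarith : (0:ℝ) ≤ 5*B - 1)]
  | succ k ih =>
    intro x
    have hWa := arith_W (hB := hB) (hR := hR) (hε := hε) (k := k)
    have hmv := stage_move (hε := hε) (hB := hB) (hR := hR) (hnet := hnet) (hphi := hphi)
      (hsc := hsc) (hf₀ := hf₀) (k := k) (g := flowN ε N col sc φ k g)
      (Wg := ε * VVc B R k) (hg2 := ih) (hW := hWa) (x := x) (u := 1)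
      (hu0 := by norm_num) (hu1 := le_refl 1)
    have hVa := arith_V (hB := hB) (hR := hR) (hε := hε) (k := k)
    have htr := dist_triangle (stage ε N col sc φ (flowN ε N col sc φ k g) k x 1)
      (flowN ε N col sc φ k g x) (f₀ x)
    have : dist (flowN ε N col sc φ (k+1) g x) (f₀ x)
        = dist (stage ε N col sc φ (flowN ε N col sc φ k g) k x 1) (f₀ x) := by
      simp only [flowN]
    rw [this]
    calc dist (stage ε N col sc φ (flowN ε N col sc φ k g) k x 1) (f₀ x)
        ≤ B * (ε * R ^ (k+1)) + ε * VVc B R k := by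
          have := ih x
          linarith
      _ ≤ ε * VVc B R (k+1) := by linarith

lemma flow_lip (k : ℕ) (hk : k ≤ K) (g : M → M')
    (hg0 : ∀ z, dist (g z) (f₀ z) ≤ ε)
    (hg1 : ∀ z z', dist (g z) (g z') ≤ B * dist z z') :
    ∀ x x', dist (flowN ε N col sc φ k g x) (flowN ε N col sc φ k g x')
      ≤ LLc B R K k * dist x x' := by
  have hR9 : 9 ≤ R := R_ge_nine (hB := hB) (hR := hR)
  induction k with
  | zero =>
    intro x x'
    simp only [flowN]
    refine (hg1 x x').trans ?_
    apply mul_le_mul_of_nonneg_right _ dist_nonneg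
    calc B ≤ 8 * B * 1 := by linarith
      _ ≤ 8 * B * R ^ (K+1) := by
          have := one_le_pow₀ (by linarith : (1:ℝ) ≤ R) (n := K+1)
          nlinarith
      _ ≤ LLc B R K 0 := by unfold LLc; rw [pow_one]
  | succ k ih =>
    intro x x'
    have hk' : k ≤ K := by omega
    have ihk := ih hk'
    have hWa := arith_W (hB := hB) (hR := hR) (hε := hε) (k := k)
    have hsl := stage_lip (hε := hε) (hB := hB) (hR := hR) (hnet := hnet) (hphi := hphi)
      (hsc := hsc) (hf₀ := hf₀) (k := k) (g := flowN ε N col sc φ k g)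
      (Lg := LLc B R K k) (Wg := ε * VVc B R k)
      (hLg0 := (LLc_pos (hB := hB) (hR := hR9) (k := k)).le)
      (hg1 := ihk)
      (hg2 := flow_wander (hε := hε) (hB := hB) (hR := hR) (hnet := hnet) (hphi := hphi)
        (hsc := hsc) (hf₀ := hf₀) (k := k) (g := g) (hg0 := hg0))
      (hW := hWa) (x := x) (x' := x') (u := 1) (u' := 1)
      (hu0 := by norm_num) (hu1 := le_refl 1) (hu'0 := by norm_num) (hu'1 := le_refl 1)
    have heq : dist (flowN ε N col sc φ (k+1) g x) (flowN ε N col sc φ (k+1) g x')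
        = dist (stage ε N col sc φ (flowN ε N col sc φ k g) k x 1)
            (stage ε N col sc φ (flowN ε N col sc φ k g) k x' 1) := by
      simp only [flowN]
    rw [heq]
    refine hsl.trans ?_
    simp only [sub_self, abs_zero, mul_zero, add_zero]
    apply mul_le_mul_of_nonneg_right _ dist_nonneg
    exact arith_L (hB := hB) (hR := hR9) (hk := hk')

lemma flow_canon (f₁ : M → M') (hf₁d : ∀ z, dist (f₁ z) (f₀ z) ≤ ε) :
    ∀ k, ∀ x, (∃ n ∈ N, col n < k ∧ dist x n ≤ 3 * ε) →
      flowN ε N col sc φ k f₀ x = flowN ε N col sc φ k f₁ x := by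
  intro k
  induction k with
  | zero =>
    rintro x ⟨n, hn, hlt, _⟩
    exact absurd hlt (Nat.not_lt_zero _)
  | succ k ih =>
    rintro x ⟨n, hnN, hlt, hx3⟩
    have heq0 : flowN ε N col sc φ (k+1) f₀ x
        = stage ε N col sc φ (flowN ε N col sc φ k f₀) k x 1 := by simp only [flowN]
    have heq1 : flowN ε N col sc φ (k+1) f₁ x
        = stage ε N col sc φ (flowN ε N col sc φ k f₁) k x 1 := by simp only [flowN]
    rw [heq0, heq1]
    rcases Nat.lt_succ_iff_lt_or_eq.mp hlt with h | h
    · exact stage_congr ε N col sc φ k _ _ x 1 (ih x ⟨n, hnN, h, hx3⟩)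
    · have hWa := arith_W (hB := hB) (hR := hR) (hε := hε) (k := k)
      have hw0 : ∀ z, dist (f₀ z) (f₀ z) ≤ ε := fun z => by
        simp only [dist_self]; exact hε.le
      rw [stage_center (hε := hε) (hB := hB) (hR := hR) (hnet := hnet) (hphi := hphi)
          (hsc := hsc) (hf₀ := hf₀) (k := k) (g := flowN ε N col sc φ k f₀)
          (Wg := ε * VVc B R k)
          (hg2 := flow_wander (hε := hε) (hB := hB) (hR := hR) (hnet := hnet) (hphi := hphi)
            (hsc := hsc) (hf₀ := hf₀) (k := k) (g := f₀) (hg0 := hw0))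
          (hW := hWa) (hn := hnN) (hcn := h) (hx3 := hx3),
        stage_center (hε := hε) (hB := hB) (hR := hR) (hnet := hnet) (hphi := hphi)
          (hsc := hsc) (hf₀ := hf₀) (k := k) (g := flowN ε N col sc φ k f₁)
          (Wg := ε * VVc B R k)
          (hg2 := flow_wander (hε := hε) (hB := hB) (hR := hR) (hnet := hnet) (hphi := hphi)
            (hsc := hsc) (hf₀ := hf₀) (k := k) (g := f₁) (hg0 := hf₁d))
          (hW := hWa) (hn := hnN) (hcn := h) (hx3 := hx3)]

/-- The assembled forward homotopy on `[0, K]`. -/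
noncomputable def Gmap (g : M → M') (x : M) (u : ℝ) : M' :=
  stage ε N col sc φ (flowN ε N col sc φ (min (K-1) ⌊u⌋₊) g) (min (K-1) ⌊u⌋₊) x
    (u - (min (K-1) ⌊u⌋₊ : ℕ))

lemma G_in_slot (hK : 1 ≤ K) {j : ℕ} (hj : j < K) {u : ℝ} (hu1 : (j:ℝ) ≤ u)
    (hu2 : u ≤ (j:ℝ) + 1) (hu3 : u < (j:ℝ) + 1) (g : M → M') (x : M) :
    Gmap ε K N col sc φ g x u
      = stage ε N col sc φ (flowN ε N col sc φ j g) j x (u - j) := by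
  have hu0 : (0:ℝ) ≤ u := le_trans (by positivity) hu1
  have hfl : ⌊u⌋₊ = j := by
    rw [Nat.floor_eq_iff hu0]
    constructor
    · exact hu1
    · push_cast
      exact hu3
  have hmin : min (K-1) j = j := min_eq_right (by omega)
  simp only [Gmap, hfl, hmin]

lemma G_slot (hK : 1 ≤ K) {j : ℕ} (hj : j < K) {u : ℝ} (hu1 : (j:ℝ) ≤ u)
    (hu2 : u ≤ (j:ℝ) + 1) (g : M → M') (hg0 : ∀ z, dist (g z) (f₀ z) ≤ ε) (x : M) :
    Gmap ε K N col sc φ g x u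
      = stage ε N col sc φ (flowN ε N col sc φ j g) j x (u - j) := by
  by_cases hu3 : u < (j:ℝ) + 1
  · exact G_in_slot (hε := hε) (hB := hB) (hR := hR) (hnet := hnet) (hphi := hphi)
      (hsc := hsc) (hf₀ := hf₀) (hK := hK) (hj := hj) (hu1 := hu1) (hu2 := hu2)
      (hu3 := hu3) (g := g) (x := x)
  · have hu4 : u = (j:ℝ) + 1 := le_antisymm hu2 (not_lt.mp hu3)
    have hRHS : stage ε N col sc φ (flowN ε N col sc φ j g) j x (u - j)
        = flowN ε N col sc φ (j+1) g x := by
      have : u - (j:ℝ) = 1 := by rw [hu4]; ring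
      rw [this]
      simp only [flowN]
    rw [hRHS]
    by_cases hjK : j + 1 < K
    · have hu0 : (0:ℝ) ≤ u := by rw [hu4]; positivity
      have hfl : ⌊u⌋₊ = j + 1 := by
        rw [Nat.floor_eq_iff hu0]
        constructor
        · rw [hu4]; push_cast; linarith
        · rw [hu4]; push_cast; linarith
      have hmin : min (K-1) (j+1) = j + 1 := min_eq_right (by omega)
      have hWa := arith_W (hB := hB) (hR := hR) (hε := hε) (k := j+1)
      have hz := stage_zero (hε := hε) (hB := hB) (hR := hR) (hnet := hnet) (hphi := hphi)
        (hsc := hsc) (hf₀ := hf₀) (k := j+1) (g := flowN ε N col sc φ (j+1) g)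
        (Wg := ε * VVc B R (j+1))
        (hg2 := flow_wander (hε := hε) (hB := hB) (hR := hR) (hnet := hnet) (hphi := hphi)
          (hsc := hsc) (hf₀ := hf₀) (k := j+1) (g := g) (hg0 := hg0))
        (hW := hWa) (x := x)
      have harg : u - ((min (K-1) ⌊u⌋₊ : ℕ) : ℝ) = 0 := by
        rw [hfl, hmin, hu4]
        push_cast
        ring
      simp only [Gmap, hfl, hmin]
      rw [show u - ((j+1 : ℕ) : ℝ) = 0 by rw [hu4]; push_cast; ring]
      exact hz
    · have hj1 : j + 1 = K := by omega
      have hu0 : (0:ℝ) ≤ u := by rw [hu4]; positivity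
      have hfl : ⌊u⌋₊ = K := by
        rw [Nat.floor_eq_iff hu0]
        constructor
        · rw [hu4]
          push_cast
          have : (j:ℝ) + 1 = (K:ℝ) := by exact_mod_cast congrArg (Nat.cast : ℕ → ℝ) hj1
          linarith [this.ge]
        · rw [hu4]
          push_cast
          have : (j:ℝ) + 1 = (K:ℝ) := by exact_mod_cast congrArg (Nat.cast : ℕ → ℝ) hj1
          linarith
      have hmin : min (K-1) K = j := by omega
      simp only [Gmap, hfl, hmin]
      have : u - (j:ℝ) = 1 := by rw [hu4]; ring
      rw [this]
      simp only [flowN]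

lemma G_slice (hK : 1 ≤ K) (g : M → M') (hg0 : ∀ z, dist (g z) (f₀ z) ≤ ε)
    (hg1 : ∀ z z', dist (g z) (g z') ≤ B * dist z z') {u : ℝ} (hu0 : 0 ≤ u)
    (huK : u ≤ (K:ℝ)) (x x' : M) :
    dist (Gmap ε K N col sc φ g x u) (Gmap ε K N col sc φ g x' u)
      ≤ LLc B R K K * dist x x' := by
  have hR9 : 9 ≤ R := R_ge_nine (hB := hB) (hR := hR)
  simp only [Gmap]
  set j := min (K-1) ⌊u⌋₊ with hj
  have hjK : j < K := by omega
  have hj1 : (j:ℝ) ≤ u := by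
    have h1 : (⌊u⌋₊ : ℝ) ≤ u := Nat.floor_le hu0
    have h2 : j ≤ ⌊u⌋₊ := min_le_right _ _
    calc (j:ℝ) ≤ (⌊u⌋₊:ℝ) := by exact_mod_cast h2
      _ ≤ u := h1
  have hj2 : u ≤ (j:ℝ) + 1 := by
    rcases le_or_gt (⌊u⌋₊) (K-1) with h | h
    · have hjj : j = ⌊u⌋₊ := min_eq_right h
      rw [hjj]
      exact (Nat.lt_floor_add_one u).le
    · have hjj : j = K-1 := min_eq_left (by omega)
      rw [hjj]
      have hc : ((K-1:ℕ):ℝ) + 1 = (K:ℝ) := by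
        push_cast [Nat.cast_sub hK]
        ring
      linarith [hc]
  have hu01 : 0 ≤ u - (j:ℝ) := by linarith
  have hu11 : u - (j:ℝ) ≤ 1 := by linarith
  have hflip := flow_lip (hε := hε) (hB := hB) (hR := hR) (hnet := hnet) (hphi := hphi)
    (hsc := hsc) (hf₀ := hf₀) (k := j) (hk := hjK.le) (g := g) (hg0 := hg0) (hg1 := hg1)
  have hWa := arith_W (hB := hB) (hR := hR) (hε := hε) (k := j)
  have hsl := stage_lip (hε := hε) (hB := hB) (hR := hR) (hnet := hnet) (hphi := hphi)
    (hsc := hsc) (hf₀ := hf₀) (k := j) (g := flowN ε N col sc φ j g)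
    (Lg := LLc B R K j) (Wg := ε * VVc B R j)
    (hLg0 := (LLc_pos (hB := hB) (hR := hR9) (k := j)).le)
    (hg1 := hflip)
    (hg2 := flow_wander (hε := hε) (hB := hB) (hR := hR) (hnet := hnet) (hphi := hphi)
      (hsc := hsc) (hf₀ := hf₀) (k := j) (g := g) (hg0 := hg0))
    (hW := hWa) (x := x) (x' := x') (u := u - j) (u' := u - j)
    (hu0 := hu01) (hu1 := hu11) (hu'0 := hu01) (hu'1 := hu11)
  refine hsl.trans ?_
  simp only [sub_self, abs_zero, mul_zero, add_zero]
  apply mul_le_mul_of_nonneg_right _ dist_nonneg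
  calc 4 * B * (LLc B R K j + R ^ (j+1)) ≤ LLc B R K (j+1) :=
        arith_L (hB := hB) (hR := hR9) (hk := hjK.le)
    _ ≤ LLc B R K K := LLc_mono (hB := hB) (hR := hR9) (h := hjK)

lemma G_track_slot (hK : 1 ≤ K) (g : M → M') (hg0 : ∀ z, dist (g z) (f₀ z) ≤ ε)
    (hg1 : ∀ z z', dist (g z) (g z') ≤ B * dist z z') {j : ℕ} (hj : j < K)
    {u u' : ℝ} (hu1 : (j:ℝ) ≤ u) (huu : u ≤ u') (hu2 : u' ≤ (j:ℝ) + 1) (x : M) :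
    dist (Gmap ε K N col sc φ g x u) (Gmap ε K N col sc φ g x u')
      ≤ B * ε * R ^ (K+1) * (u' - u) := by
  have hR9 : 9 ≤ R := R_ge_nine (hB := hB) (hR := hR)
  have hR1 : (1:ℝ) ≤ R := by linarith
  rw [G_slot (hε := hε) (hB := hB) (hR := hR) (hnet := hnet) (hphi := hphi) (hsc := hsc)
      (hf₀ := hf₀) (hK := hK) (hj := hj) (hu1 := hu1) (hu2 := by linarith) (g := g)
      (hg0 := hg0) (x := x),
    G_slot (hε := hε) (hB := hB) (hR := hR) (hnet := hnet) (hphi := hphi) (hsc := hsc)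
      (hf₀ := hf₀) (hK := hK) (hj := hj) (hu1 := by linarith) (hu2 := hu2) (g := g)
      (hg0 := hg0) (x := x)]
  have hflip := flow_lip (hε := hε) (hB := hB) (hR := hR) (hnet := hnet) (hphi := hphi)
    (hsc := hsc) (hf₀ := hf₀) (k := j) (hk := hj.le) (g := g) (hg0 := hg0) (hg1 := hg1)
  have hWa := arith_W (hB := hB) (hR := hR) (hε := hε) (k := j)
  have hsl := stage_lip (hε := hε) (hB := hB) (hR := hR) (hnet := hnet) (hphi := hphi)
    (hsc := hsc) (hf₀ := hf₀) (k := j) (g := flowN ε N col sc φ j g)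
    (Lg := LLc B R K j) (Wg := ε * VVc B R j)
    (hLg0 := (LLc_pos (hB := hB) (hR := hR9) (k := j)).le)
    (hg1 := hflip)
    (hg2 := flow_wander (hε := hε) (hB := hB) (hR := hR) (hnet := hnet) (hphi := hphi)
      (hsc := hsc) (hf₀ := hf₀) (k := j) (g := g) (hg0 := hg0))
    (hW := hWa) (x := x) (x' := x) (u := u - j) (u' := u' - j)
    (hu0 := by linarith) (hu1 := by linarith) (hu'0 := by linarith) (hu'1 := by linarith)
  refine hsl.trans ?_
  simp only [dist_self, mul_zero, zero_add]
  have habs : |u - (j:ℝ) - (u' - (j:ℝ))| = u' - u := by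
    rw [show u - (j:ℝ) - (u' - (j:ℝ)) = -(u' - u) by ring, abs_neg, abs_of_nonneg (by linarith)]
  rw [habs]
  apply mul_le_mul_of_nonneg_right _ (by linarith)
  have hpow : R ^ (j+1) ≤ R ^ (K+1) := pow_le_pow_right₀ hR1 (by omega)
  have hB0 : (0:ℝ) < B := by linarith
  nlinarith [mul_le_mul_of_nonneg_left hpow (by positivity : (0:ℝ) ≤ B * ε)]
lemma G_track (hK : 1 ≤ K) (g : M → M') (hg0 : ∀ z, dist (g z) (f₀ z) ≤ ε)
    (hg1 : ∀ z z', dist (g z) (g z') ≤ B * dist z z') (x : M) :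
    ∀ jm : ℕ, jm ≤ K → ∀ u u', 0 ≤ u → u ≤ u' → u' ≤ (jm:ℝ) →
      dist (Gmap ε K N col sc φ g x u) (Gmap ε K N col sc φ g x u')
        ≤ B * ε * R ^ (K+1) * (u' - u) := by
  intro jm
  induction jm with
  | zero =>
    intro _ u u' hu0 huu hu'0
    have hu'z : u' ≤ 0 := by exact_mod_cast hu'0
    have : u = u' := le_antisymm huu (by linarith)
    rw [this]
    simp only [dist_self, sub_self, mul_zero]
    exact le_refl 0
  | succ jm ih =>
    intro hjm u u' hu0 huu hu'K
    have hcast : ((jm+1:ℕ):ℝ) = (jm:ℝ) + 1 := by push_cast; ring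
    rw [hcast] at hu'K
    by_cases hcase : u' ≤ (jm:ℝ)
    · exact ih (by omega) u u' hu0 huu hcase
    · push_neg at hcase
      by_cases hcase2 : (jm:ℝ) ≤ u
      · exact G_track_slot (hε := hε) (hB := hB) (hR := hR) (hnet := hnet) (hphi := hphi)
          (hsc := hsc) (hf₀ := hf₀) (hK := hK) (g := g) (hg0 := hg0) (hg1 := hg1)
          (hj := (by omega : jm < K)) (hu1 := hcase2) (huu := huu) (hu2 := hu'K) (x := x)
      · push_neg at hcase2
        have h1 := ih (by omega) u (jm:ℝ) hu0 hcase2.le le_rfl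
        have h2 := G_track_slot (hε := hε) (hB := hB) (hR := hR) (hnet := hnet)
          (hphi := hphi) (hsc := hsc) (hf₀ := hf₀) (hK := hK) (g := g) (hg0 := hg0)
          (hg1 := hg1) (hj := (by omega : jm < K)) (hu1 := le_refl ((jm:ℕ):ℝ))
          (huu := hcase.le) (hu2 := hu'K) (x := x)
        have htri := dist_triangle (Gmap ε K N col sc φ g x u)
          (Gmap ε K N col sc φ g x ((jm:ℕ):ℝ)) (Gmap ε K N col sc φ g x u')
        refine htri.trans ?_
        linarith

lemma G_zero (hK : 1 ≤ K) (g : M → M') (hg0 : ∀ z, dist (g z) (f₀ z) ≤ ε) (x : M) :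
    Gmap ε K N col sc φ g x 0 = g x := by
  have hR9 : 9 ≤ R := R_ge_nine (hB := hB) (hR := hR)
  rw [G_slot (hε := hε) (hB := hB) (hR := hR) (hnet := hnet) (hphi := hphi) (hsc := hsc)
      (hf₀ := hf₀) (hK := hK) (hj := (by omega : 0 < K)) (hu1 := by norm_num)
      (hu2 := by norm_num) (g := g) (hg0 := hg0) (x := x)]
  simp only [Nat.cast_zero, sub_zero, flowN]
  have hW1 : ε + 4 * B * ε ≤ ε * R ^ (0+1) := by
    rw [pow_one, hR]
    nlinarith
  exact stage_zero (hε := hε) (hB := hB) (hR := hR) (hnet := hnet) (hphi := hphi)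
    (hsc := hsc) (hf₀ := hf₀) (k := 0) (g := g) (Wg := ε) (hg2 := hg0) (hW := hW1) (x := x)

lemma G_top (hK : 1 ≤ K) (g : M → M') (hg0 : ∀ z, dist (g z) (f₀ z) ≤ ε) (x : M) :
    Gmap ε K N col sc φ g x (K:ℝ) = flowN ε N col sc φ K g x := by
  have hcast : ((K-1:ℕ):ℝ) = (K:ℝ) - 1 := by
    push_cast [Nat.cast_sub hK]
    ring
  rw [G_slot (hε := hε) (hB := hB) (hR := hR) (hnet := hnet) (hphi := hphi) (hsc := hsc)
      (hf₀ := hf₀) (hK := hK) (hj := (by omega : K - 1 < K))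
      (hu1 := by
        rw [hcast]
        have : (1:ℝ) ≤ (K:ℝ) := by exact_mod_cast hK
        linarith)
      (hu2 := by rw [hcast]; linarith) (g := g) (hg0 := hg0) (x := x)]
  rw [hcast]
  rw [show (K:ℝ) - ((K:ℝ) - 1) = 1 by ring]
  have hKeq : K - 1 + 1 = K := by omega
  calc stage ε N col sc φ (flowN ε N col sc φ (K-1) g) (K-1) x 1
      = flowN ε N col sc φ (K-1+1) g x := by simp only [flowN]
    _ = flowN ε N col sc φ K g x := by rw [hKeq]

lemma G_track' (hK : 1 ≤ K) (g : M → M') (hg0 : ∀ z, dist (g z) (f₀ z) ≤ ε)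
    (hg1 : ∀ z z', dist (g z) (g z') ≤ B * dist z z') (x : M) {u u' : ℝ}
    (hu0 : 0 ≤ u) (huK : u ≤ (K:ℝ)) (hu'0 : 0 ≤ u') (hu'K : u' ≤ (K:ℝ)) :
    dist (Gmap ε K N col sc φ g x u) (Gmap ε K N col sc φ g x u')
      ≤ B * ε * R ^ (K+1) * |u - u'| := by
  rcases le_total u u' with h | h
  · rw [abs_of_nonpos (by linarith), neg_sub]
    exact G_track (ε := ε) (B := B) (R := R) (K := K) (N := N) (col := col) (sc := sc) (f₀ := f₀) (φ := φ) (q := q) (hε := hε) (hB := hB) (hR := hR) (hnet := hnet) (hphi := hphi)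
      (hsc := hsc) (hf₀ := hf₀) (hK := hK) (g := g) (hg0 := hg0) (hg1 := hg1) (x := x)
      K le_rfl u u' hu0 h hu'K
  · rw [abs_of_nonneg (by linarith), dist_comm]
    have := G_track (ε := ε) (B := B) (R := R) (K := K) (N := N) (col := col) (sc := sc) (f₀ := f₀) (φ := φ) (q := q) (hε := hε) (hB := hB) (hR := hR) (hnet := hnet) (hphi := hphi)
      (hsc := hsc) (hf₀ := hf₀) (hK := hK) (g := g) (hg0 := hg0) (hg1 := hg1) (x := x)
      K le_rfl u' u hu'0 h huK
    exact this

lemma htpy_main (hK : 1 ≤ K) (f₁ : M → M')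
    (hf₁B : ∀ z z', dist (f₁ z) (f₁ z') ≤ B * dist z z')
    (hf₁d : ∀ z, dist (f₁ z) (f₀ z) ≤ ε) :
    ∃ h : M → ℝ → M',
      IsLipHtpyMap (LLc B R K K + 2 * K * B * R ^ (K+1)) ε h ∧
      (∀ x, h x 0 = f₀ x) ∧ (∀ x, h x ε = f₁ x) := by
  classical
  have hR9 : 9 ≤ R := R_ge_nine (hB := hB) (hR := hR)
  have hB0 : (0:ℝ) < B := by linarith
  have hRK0 : (0:ℝ) < R ^ (K+1) := by positivity
  have hKc : (1:ℝ) ≤ (K:ℝ) := by exact_mod_cast hK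
  have hSL0 : 0 < LLc B R K K := LLc_pos (hB := hB) (hR := hR9) (k := K)
  have hT0 : (0:ℝ) < 2 * K * B * R ^ (K+1) := by positivity
  have hw0 : ∀ z, dist (f₀ z) (f₀ z) ≤ ε := fun z => by
    simp only [dist_self]; exact hε.le
  have hf₀B : ∀ z z', dist (f₀ z) (f₀ z') ≤ B * dist z z' := hf₀
  have hcanon : ∀ x, flowN ε N col sc φ K f₀ x = flowN ε N col sc φ K f₁ x := by
    intro x
    obtain ⟨n, hn, hxn⟩ := hnet.2.1 x
    exact flow_canon (ε := ε) (B := B) (R := R) (K := K) (N := N) (col := col) (sc := sc) (f₀ := f₀) (φ := φ) (q := q) (hε := hε) (hB := hB) (hR := hR) (hnet := hnet) (hphi := hphi)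
      (hsc := hsc) (hf₀ := hf₀) (f₁ := f₁) (hf₁d := hf₁d) K x
      ⟨n, hn, hnet.2.2.1 n, by linarith [hxn.le]⟩
  have humem : ∀ {t : ℝ}, 0 ≤ t → t ≤ ε/2 → 0 ≤ 2*K*t/ε ∧ 2*K*t/ε ≤ (K:ℝ) := by
    intro t ht0 ht1
    constructor
    · positivity
    · rw [div_le_iff₀ hε]
      nlinarith
  have hkey : ∀ t t' : ℝ, B * ε * R ^ (K+1) * |2*K*t/ε - 2*K*t'/ε|
      = 2 * K * B * R ^ (K+1) * |t - t'| := by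
    intro t t'
    rw [show 2*(K:ℝ)*t/ε - 2*K*t'/ε = (2*K/ε)*(t - t') by field_simp,
      abs_mul, abs_of_nonneg (by positivity : (0:ℝ) ≤ 2*(K:ℝ)/ε)]
    field_simp
  refine ⟨fun x t => if t ≤ ε/2 then Gmap ε K N col sc φ f₀ x (2*K*t/ε)
    else Gmap ε K N col sc φ f₁ x (2*K*(ε - t)/ε), ?_, ?_, ?_⟩
  · -- Lipschitz property
    intro x x' s hs s' hs'
    obtain ⟨hs0, hsε⟩ := hs
    obtain ⟨hs'0, hs'ε⟩ := hs'
    have habs0 : (0:ℝ) ≤ |s - s'| := abs_nonneg _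
    have hd0 : (0:ℝ) ≤ dist x x' := dist_nonneg
    have hfinal : ∀ d t : ℝ, 0 ≤ d → 0 ≤ t →
        LLc B R K K * d + 2 * K * B * R ^ (K+1) * t
        ≤ (LLc B R K K + 2 * K * B * R ^ (K+1)) * (d + t) := by
      intro d t hd ht
      nlinarith
    simp only []
    by_cases hcs : s ≤ ε/2 <;> by_cases hcs' : s' ≤ ε/2
    · rw [if_pos hcs, if_pos hcs']
      have h1 := G_slice (hε := hε) (hB := hB) (hR := hR) (hnet := hnet) (hphi := hphi)
        (hsc := hsc) (hf₀ := hf₀) (hK := hK) (g := f₀) (hg0 := hw0) (hg1 := hf₀B)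
        (hu0 := (humem hs0 hcs).1) (huK := (humem hs0 hcs).2) (x := x) (x' := x')
      have h2 := G_track' (hε := hε) (hB := hB) (hR := hR) (hnet := hnet) (hphi := hphi)
        (hsc := hsc) (hf₀ := hf₀) (hK := hK) (g := f₀) (hg0 := hw0) (hg1 := hf₀B)
        (x := x') (hu0 := (humem hs0 hcs).1) (huK := (humem hs0 hcs).2)
        (hu'0 := (humem hs'0 hcs').1) (hu'K := (humem hs'0 hcs').2)
      have htri := dist_triangle (Gmap ε K N col sc φ f₀ x (2*K*s/ε))
        (Gmap ε K N col sc φ f₀ x' (2*K*s/ε)) (Gmap ε K N col sc φ f₀ x' (2*K*s'/ε))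
      rw [hkey s s'] at h2
      refine htri.trans (le_trans (by linarith) (hfinal _ _ hd0 habs0))
    · -- s ≤ ε/2 < s'
      push_neg at hcs'
      rw [if_pos hcs, if_neg (not_le.mpr hcs')]
      have hv'0 : 0 ≤ 2*K*(ε - s')/ε := by
        have : (0:ℝ) ≤ ε - s' := by linarith
        positivity
      have hv'K : 2*K*(ε - s')/ε ≤ (K:ℝ) := by
        rw [div_le_iff₀ hε]
        nlinarith
      have hu0 := (humem hs0 hcs).1
      have huK := (humem hs0 hcs).2
      have hKK : (0:ℝ) ≤ (K:ℝ) ∧ (K:ℝ) ≤ (K:ℝ) := ⟨by positivity, le_rfl⟩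
      -- track f₀ from u_s to K
      have t1 := G_track' (hε := hε) (hB := hB) (hR := hR) (hnet := hnet) (hphi := hphi)
        (hsc := hsc) (hf₀ := hf₀) (hK := hK) (g := f₀) (hg0 := hw0) (hg1 := hf₀B)
        (x := x) (hu0 := hu0) (huK := huK) (hu'0 := hKK.1) (hu'K := hKK.2)
        (u' := (K:ℝ))
      -- slice at K with f₁
      have t2 := G_slice (hε := hε) (hB := hB) (hR := hR) (hnet := hnet) (hphi := hphi)
        (hsc := hsc) (hf₀ := hf₀) (hK := hK) (g := f₁) (hg0 := hf₁d) (hg1 := hf₁B)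
        (hu0 := hKK.1) (huK := hKK.2) (x := x) (x' := x') (u := (K:ℝ))
      -- track f₁ from K to v_s'
      have t3 := G_track' (hε := hε) (hB := hB) (hR := hR) (hnet := hnet) (hphi := hphi)
        (hsc := hsc) (hf₀ := hf₀) (hK := hK) (g := f₁) (hg0 := hf₁d) (hg1 := hf₁B)
        (x := x') (hu0 := hKK.1) (huK := hKK.2) (hu'0 := hv'0) (hu'K := hv'K)
        (u := (K:ℝ))
      -- switch from f₀ to f₁ at the top
      have hsw : Gmap ε K N col sc φ f₀ x (K:ℝ) = Gmap ε K N col sc φ f₁ x (K:ℝ) := by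
        rw [G_top (hε := hε) (hB := hB) (hR := hR) (hnet := hnet) (hphi := hphi)
            (hsc := hsc) (hf₀ := hf₀) (hK := hK) (g := f₀) (hg0 := hw0) (x := x),
          G_top (hε := hε) (hB := hB) (hR := hR) (hnet := hnet) (hphi := hphi)
            (hsc := hsc) (hf₀ := hf₀) (hK := hK) (g := f₁) (hg0 := hf₁d) (x := x)]
        exact hcanon x
      have htri := dist_triangle4 (Gmap ε K N col sc φ f₀ x (2*K*s/ε))
        (Gmap ε K N col sc φ f₀ x (K:ℝ)) (Gmap ε K N col sc φ f₁ x' (K:ℝ))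
        (Gmap ε K N col sc φ f₁ x' (2*K*(ε - s')/ε))
      rw [hsw] at htri
      have e1 : B * ε * R ^ (K+1) * |2*K*s/ε - (K:ℝ)|
          = 2 * K * B * R ^ (K+1) * (ε/2 - s) := by
        have h5 : 2*(K:ℝ)*s/ε - (K:ℝ) = (2*K/ε) * (s - ε/2) := by field_simp
        rw [h5, abs_mul, abs_of_nonneg (by positivity : (0:ℝ) ≤ 2*(K:ℝ)/ε),
          abs_of_nonpos (by linarith : s - ε/2 ≤ 0)]
        field_simp
        ring
      have e3 : B * ε * R ^ (K+1) * |(K:ℝ) - 2*K*(ε - s')/ε|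
          = 2 * K * B * R ^ (K+1) * (s' - ε/2) := by
        have h5 : (K:ℝ) - 2*K*(ε - s')/ε = (2*K/ε) * (s' - ε/2) := by field_simp; ring
        rw [h5, abs_mul, abs_of_nonneg (by positivity : (0:ℝ) ≤ 2*(K:ℝ)/ε),
          abs_of_nonneg (by linarith : (0:ℝ) ≤ s' - ε/2)]
        field_simp
      rw [e1] at t1
      rw [e3] at t3
      rw [hsw] at t1
      have habss : |s - s'| = s' - s := by
        rw [abs_of_nonpos (by linarith), neg_sub]
      refine htri.trans (le_trans ?_ (hfinal _ _ hd0 habs0))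
      rw [habss]
      linarith
    · -- s' ≤ ε/2 < s : symmetric
      push_neg at hcs
      rw [if_neg (not_le.mpr hcs), if_pos hcs']
      have hv0 : 0 ≤ 2*K*(ε - s)/ε := by
        have : (0:ℝ) ≤ ε - s := by linarith
        positivity
      have hvK : 2*K*(ε - s)/ε ≤ (K:ℝ) := by
        rw [div_le_iff₀ hε]
        nlinarith
      have hu'0 := (humem hs'0 hcs').1
      have hu'K := (humem hs'0 hcs').2
      have hKK : (0:ℝ) ≤ (K:ℝ) ∧ (K:ℝ) ≤ (K:ℝ) := ⟨by positivity, le_rfl⟩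
      have t1 := G_track' (hε := hε) (hB := hB) (hR := hR) (hnet := hnet) (hphi := hphi)
        (hsc := hsc) (hf₀ := hf₀) (hK := hK) (g := f₁) (hg0 := hf₁d) (hg1 := hf₁B)
        (x := x) (hu0 := hv0) (huK := hvK) (hu'0 := hKK.1) (hu'K := hKK.2)
        (u' := (K:ℝ))
      have t2 := G_slice (hε := hε) (hB := hB) (hR := hR) (hnet := hnet) (hphi := hphi)
        (hsc := hsc) (hf₀ := hf₀) (hK := hK) (g := f₀) (hg0 := hw0) (hg1 := hf₀B)
        (hu0 := hKK.1) (huK := hKK.2) (x := x) (x' := x') (u := (K:ℝ))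
      have t3 := G_track' (hε := hε) (hB := hB) (hR := hR) (hnet := hnet) (hphi := hphi)
        (hsc := hsc) (hf₀ := hf₀) (hK := hK) (g := f₀) (hg0 := hw0) (hg1 := hf₀B)
        (x := x') (hu0 := hKK.1) (huK := hKK.2) (hu'0 := hu'0) (hu'K := hu'K)
        (u := (K:ℝ))
      have hsw : Gmap ε K N col sc φ f₁ x (K:ℝ) = Gmap ε K N col sc φ f₀ x (K:ℝ) := by
        rw [G_top (hε := hε) (hB := hB) (hR := hR) (hnet := hnet) (hphi := hphi)
            (hsc := hsc) (hf₀ := hf₀) (hK := hK) (g := f₀) (hg0 := hw0) (x := x),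
          G_top (hε := hε) (hB := hB) (hR := hR) (hnet := hnet) (hphi := hphi)
            (hsc := hsc) (hf₀ := hf₀) (hK := hK) (g := f₁) (hg0 := hf₁d) (x := x)]
        exact (hcanon x).symm
      have htri := dist_triangle4 (Gmap ε K N col sc φ f₁ x (2*K*(ε - s)/ε))
        (Gmap ε K N col sc φ f₁ x (K:ℝ)) (Gmap ε K N col sc φ f₀ x' (K:ℝ))
        (Gmap ε K N col sc φ f₀ x' (2*K*s'/ε))
      rw [hsw] at htri
      have e1 : B * ε * R ^ (K+1) * |2*K*(ε - s)/ε - (K:ℝ)|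
          = 2 * K * B * R ^ (K+1) * (s - ε/2) := by
        have h5 : 2*(K:ℝ)*(ε - s)/ε - (K:ℝ) = (2*K/ε) * (ε/2 - s) := by field_simp; ring
        rw [h5, abs_mul, abs_of_nonneg (by positivity : (0:ℝ) ≤ 2*(K:ℝ)/ε),
          abs_of_nonpos (by linarith : ε/2 - s ≤ 0)]
        field_simp
        ring
      have e3 : B * ε * R ^ (K+1) * |(K:ℝ) - 2*K*s'/ε|
          = 2 * K * B * R ^ (K+1) * (ε/2 - s') := by
        have h5 : (K:ℝ) - 2*(K:ℝ)*s'/ε = (2*K/ε) * (ε/2 - s') := by field_simp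
        rw [h5, abs_mul, abs_of_nonneg (by positivity : (0:ℝ) ≤ 2*(K:ℝ)/ε),
          abs_of_nonneg (by linarith : (0:ℝ) ≤ ε/2 - s')]
        field_simp
      rw [e1] at t1
      rw [e3] at t3
      rw [hsw] at t1
      have habss : |s - s'| = s - s' := abs_of_nonneg (by linarith)
      refine htri.trans (le_trans ?_ (hfinal _ _ hd0 habs0))
      rw [habss]
      linarith
    · push_neg at hcs hcs'
      rw [if_neg (not_le.mpr hcs), if_neg (not_le.mpr hcs')]
      have hv0 : 0 ≤ 2*K*(ε - s)/ε := by
        have : (0:ℝ) ≤ ε - s := by linarith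
        positivity
      have hvK : 2*K*(ε - s)/ε ≤ (K:ℝ) := by
        rw [div_le_iff₀ hε]
        nlinarith
      have hv'0 : 0 ≤ 2*K*(ε - s')/ε := by
        have : (0:ℝ) ≤ ε - s' := by linarith
        positivity
      have hv'K : 2*K*(ε - s')/ε ≤ (K:ℝ) := by
        rw [div_le_iff₀ hε]
        nlinarith
      have h1 := G_slice (hε := hε) (hB := hB) (hR := hR) (hnet := hnet) (hphi := hphi)
        (hsc := hsc) (hf₀ := hf₀) (hK := hK) (g := f₁) (hg0 := hf₁d) (hg1 := hf₁B)
        (hu0 := hv0) (huK := hvK) (x := x) (x' := x')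
      have h2 := G_track' (hε := hε) (hB := hB) (hR := hR) (hnet := hnet) (hphi := hphi)
        (hsc := hsc) (hf₀ := hf₀) (hK := hK) (g := f₁) (hg0 := hf₁d) (hg1 := hf₁B)
        (x := x') (hu0 := hv0) (huK := hvK) (hu'0 := hv'0) (hu'K := hv'K)
      have hkeyv : B * ε * R ^ (K+1) * |2*K*(ε - s)/ε - 2*K*(ε - s')/ε|
          = 2 * K * B * R ^ (K+1) * |s - s'| := by
        rw [hkey (ε - s) (ε - s'), show (ε - s) - (ε - s') = -(s - s') by ring, abs_neg]
      rw [hkeyv] at h2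
      have htri := dist_triangle (Gmap ε K N col sc φ f₁ x (2*K*(ε - s)/ε))
        (Gmap ε K N col sc φ f₁ x' (2*K*(ε - s)/ε))
        (Gmap ε K N col sc φ f₁ x' (2*K*(ε - s')/ε))
      refine htri.trans (le_trans (by linarith) (hfinal _ _ hd0 habs0))
  · -- h x 0 = f₀ x
    intro x
    beta_reduce
    rw [if_pos (by linarith : (0:ℝ) ≤ ε/2)]
    rw [show 2*(K:ℝ)*0/ε = 0 by ring]
    exact G_zero (hε := hε) (hB := hB) (hR := hR) (hnet := hnet) (hphi := hphi)
      (hsc := hsc) (hf₀ := hf₀) (hK := hK) (g := f₀) (hg0 := hw0) (x := x)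
  · -- h x ε = f₁ x
    intro x
    beta_reduce
    rw [if_neg (by intro h; linarith : ¬ (ε ≤ ε/2))]
    rw [show 2*(K:ℝ)*(ε - ε)/ε = 0 by ring]
    exact G_zero (hε := hε) (hB := hB) (hR := hR) (hnet := hnet) (hphi := hphi)
      (hsc := hsc) (hf₀ := hf₀) (hK := hK) (g := f₁) (hg0 := hf₁d) (x := x)

end Core

end LipHtpyAux

/-- **Proposition.** For every `C > 0` there exist `C̃ > 0` and `ε₀ > 0` such that:
if `M` and `M'` are metric spaces that are locally `C`-Lipschitz contractible and
`C`-doubling, `0 < ε < ε₀`, and `f₀, f₁ : M → M'` are `C`-Lipschitz maps that are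
uniformly `ε`-close, then `f₀` and `f₁` are `(C̃, ε)`-Lipschitz homotopic. -/
theorem lipschitz_homotopic_of_close :
    ∀ C : ℝ, 0 < C → ∃ Ct : ℝ, 0 < Ct ∧ ∃ ε₀ : ℝ, 0 < ε₀ ∧
      ∀ (M M' : Type*) [MetricSpace M] [MetricSpace M'],
        LocallyLipContractible M C → IsDoubling M C →
        LocallyLipContractible M' C → IsDoubling M' C →
        ∀ ε : ℝ, 0 < ε → ε < ε₀ →
          ∀ f₀ f₁ : M → M',
            (∀ x x' : M, dist (f₀ x) (f₀ x') ≤ C * dist x x') →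
            (∀ x x' : M, dist (f₁ x) (f₁ x') ≤ C * dist x x') →
            (∀ x : M, dist (f₀ x) (f₁ x) ≤ ε) →
            LipHomotopic Ct ε f₀ f₁ := by
  classical
  intro C hC
  set B : ℝ := C + 1 with hBdef
  set R : ℝ := 9 * B with hRdef
  set K : ℕ := (⌈B⌉₊) ^ 5 with hKdef
  have hB1 : (1:ℝ) ≤ B := by rw [hBdef]; linarith
  have hB0 : (0:ℝ) < B := by linarith
  have hCB : C ≤ B := by rw [hBdef]; linarith
  have hR9 : (9:ℝ) ≤ R := by rw [hRdef]; linarith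
  have hR1 : (1:ℝ) ≤ R := by linarith
  have hR0 : (0:ℝ) < R := by linarith
  have hK1 : 1 ≤ K := by
    rw [hKdef]
    exact Nat.one_le_pow _ _ (Nat.ceil_pos.mpr (by linarith))
  have hK0 : (0:ℝ) < (K:ℝ) := by exact_mod_cast hK1
  have hSL0 : (0:ℝ) < LipHtpyAux.LLc B R K K :=
    LipHtpyAux.LLc_pos (hB := hB1) (hR := hR9) (k := K)
  have hT0 : (0:ℝ) < 2 * K * B * R ^ (K+1) := by
    apply mul_pos (mul_pos (mul_pos two_pos hK0) hB0) (pow_pos hR0 _)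
  have hy0 : (0:ℝ) < B ^ 2 * R ^ (K+3) := by
    apply mul_pos (pow_pos hB0 2) (pow_pos hR0 _)
  refine ⟨LipHtpyAux.LLc B R K K + 2 * K * B * R ^ (K+1), by linarith,
    (B ^ 2 * R ^ (K+3))⁻¹, inv_pos.mpr hy0, ?_⟩
  intro M M' _ _ hLLCM hDM hLLCM' hDM' ε hε hεlt f₀ f₁ hf₀C hf₁C hclose
  have hεy : ε * (B ^ 2 * R ^ (K+3)) < 1 := by
    have h1 := mul_lt_mul_of_pos_right hεlt hy0
    rwa [inv_mul_cancel₀ hy0.ne'] at h1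
  have hpow2 : (1:ℝ) ≤ R ^ (K+2) := one_le_pow₀ hR1
  have hpowK : (1:ℝ) ≤ R ^ K := one_le_pow₀ hR1
  have h9ε : 9 * ε < C⁻¹ := by
    rw [← one_div, lt_div_iff₀ hC]
    have c1 : 9 * ε * C ≤ R * ε * B := by
      nlinarith [mul_nonneg hε.le hC.le,
        mul_nonneg (mul_nonneg (by linarith : (0:ℝ) ≤ R) hε.le) (by linarith : (0:ℝ) ≤ B - C)]
    have c2 : R * ε * B ≤ ε * (B ^ 2 * R ^ (K+3)) := by
      have hx : R * B ≤ B ^ 2 * R ^ (K+3) := by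
        have e1 : B ^ 2 * R ^ (K+3) = (B * R ^ (K+2)) * (B * R) := by ring
        rw [e1]
        have hh1 : (1:ℝ) ≤ B * R ^ (K+2) := by nlinarith
        nlinarith [mul_le_mul_of_nonneg_left hh1 (mul_pos hB0 hR0).le]
      nlinarith [mul_le_mul_of_nonneg_left hx hε.le]
    linarith
  -- the net
  obtain ⟨N, hsep, hcov⟩ := LipHtpyAux.exists_net (M := M) ε hε
  -- bounded neighbour finsets
  have hFn : ∀ n ∈ N, ∃ F : Finset M, F.card ≤ K ∧ n ∈ F ∧
      ∀ m ∈ N, dist m n < 9 * ε → m ∈ F := by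
    intro n hn
    obtain ⟨F, hFc, hFin⟩ := LipHtpyAux.nbr_finset (hD := hDM) (hC := hC) (hε := hε)
      (h9 := h9ε) (hsep := hsep) (n := n)
    refine ⟨F, ?_, hFin n hn (by simp only [dist_self]; positivity), hFin⟩
    have hC5 : C ^ 5 ≤ (K:ℝ) := by
      have h1 : C ≤ ((⌈B⌉₊ : ℕ) : ℝ) := le_trans hCB (Nat.le_ceil B)
      have h2 : C ^ 5 ≤ ((⌈B⌉₊ : ℕ) : ℝ) ^ 5 := pow_le_pow_left₀ hC.le h1 5
      rw [hKdef]
      push_cast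
      exact h2
    exact_mod_cast hFc.trans hC5
  -- the coloring
  obtain ⟨col, hcolK, hprop⟩ := LipHtpyAux.exists_coloring (hε := hε) (K := K)
    (hK := hK1) (hF := hFn)
  set col' : M → ℕ := fun m => min (col m) (K - 1) with hcol'def
  have hcol'eq : ∀ m ∈ N, col' m = col m := by
    intro m hm
    have := hcolK m hm
    simp only [hcol'def]
    omega
  have hnet : LipHtpyAux.NetOK ε N col' K := by
    refine ⟨hsep, hcov, ?_, ?_⟩
    · intro n
      simp only [hcol'def]
      omega
    · intro m hm n hn hmn hd
      rw [hcol'eq m hm, hcol'eq n hn]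
      exact hprop m hm n hn hmn hd
  -- scales
  set sc : M → ℝ := fun n => ε * R ^ (col' n + 1) with hscdef
  have hscpos : ∀ n, 0 < sc n := fun n => mul_pos hε (pow_pos hR0 _)
  have hscC : ∀ n : M, sc n < C⁻¹ := by
    intro n
    rw [← one_div, lt_div_iff₀ hC]
    have hj : col' n + 1 ≤ K := by
      simp only [hcol'def]
      omega
    have hp : R ^ (col' n + 1) ≤ R ^ K := pow_le_pow_right₀ hR1 hj
    have c1 : sc n * C ≤ ε * R ^ K * B := by
      simp only [hscdef]
      nlinarith [mul_nonneg hε.le hC.le, pow_nonneg hR0.le (col' n + 1),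
        mul_nonneg (mul_nonneg hε.le (pow_nonneg hR0.le K)) (by linarith : (0:ℝ) ≤ B - C)]
    have c2 : ε * R ^ K * B ≤ ε * (B ^ 2 * R ^ (K+3)) := by
      have hx : R ^ K * B ≤ B ^ 2 * R ^ (K+3) := by
        have e1 : B ^ 2 * R ^ (K+3) = (B * R ^ 3) * (B * R ^ K) := by ring
        rw [e1]
        have h3 : (1:ℝ) ≤ B * R ^ 3 := by nlinarith [one_le_pow₀ hR1 (n := 3)]
        nlinarith [mul_pos hB0 (pow_pos hR0 K)]
      nlinarith [mul_le_mul_of_nonneg_left hx hε.le]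
    linarith
  -- Lipschitz bounds with constant B
  have hf₀B : ∀ x x', dist (f₀ x) (f₀ x') ≤ B * dist x x' := fun x x' =>
    (hf₀C x x').trans (mul_le_mul_of_nonneg_right hCB dist_nonneg)
  have hf₁B : ∀ x x', dist (f₁ x) (f₁ x') ≤ B * dist x x' := fun x x' =>
    (hf₁C x x').trans (mul_le_mul_of_nonneg_right hCB dist_nonneg)
  have hf₁d : ∀ z, dist (f₁ z) (f₀ z) ≤ ε := fun z => by
    rw [dist_comm]; exact hclose z
  -- choose the contractions in the target
  have hchoice : ∀ n : M, ∃ (φn : M' → ℝ → M') (qn : M'),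
      (∀ y y' s s', dist y (f₀ n) < sc n → dist y' (f₀ n) < sc n →
        0 ≤ s → s ≤ sc n → 0 ≤ s' → s' ≤ sc n →
        dist (φn y s) (φn y' s') ≤ B * (dist y y' + |s - s'|)) ∧
      (∀ y, dist y (f₀ n) < sc n → φn y 0 = y) ∧
      (∀ y, dist y (f₀ n) < sc n → φn y (sc n) = qn) := by
    intro n
    obtain ⟨U, _, hUb, p, hpU, φn, hmem, hlip, h0, h1, _⟩ :=
      hLLCM' (f₀ n) (sc n) (hscpos n) (hscC n)
    refine ⟨φn, p, ?_, ?_, ?_⟩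
    · intro y y' s s' hy hy' hs0 hs1 hs'0 hs'1
      have := hlip y (hUb (Metric.mem_ball'.mpr (by rwa [dist_comm] at hy)))
        y' (hUb (Metric.mem_ball'.mpr (by rwa [dist_comm] at hy')))
        s ⟨hs0, hs1⟩ s' ⟨hs'0, hs'1⟩
      refine this.trans (mul_le_mul_of_nonneg_right hCB ?_)
      positivity
    · intro y hy
      exact h0 y (hUb (Metric.mem_ball'.mpr (by rwa [dist_comm] at hy)))
    · intro y hy
      exact h1 y (hUb (Metric.mem_ball'.mpr (by rwa [dist_comm] at hy)))
  choose φf qf hφprops using hchoice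
  have hphi : LipHtpyAux.PhiOK B f₀ sc φf qf := hφprops
  -- conclude
  obtain ⟨h, hh1, hh2, hh3⟩ := LipHtpyAux.htpy_main (ε := ε) (B := B) (R := R) (K := K)
    (N := N) (col := col') (sc := sc) (f₀ := f₀) (φ := φf) (q := qf)
    (hε := hε) (hB := hB1) (hR := hRdef) (hnet := hnet) (hphi := hphi)
    (hsc := fun n => rfl) (hf₀ := hf₀B) (hK := hK1) (f₁ := f₁)
    (hf₁B := hf₁B) (hf₁d := hf₁d)
  exact ⟨h, hh1, hh2, hh3⟩
end

section
/- Let C > 0, ε > 0, let M be a metric space, and let {U_j}_{j=1}^{N} be a finite open covering of M by proper open subsets such that (i) for every p ∈ M the open ball B(p,ε) is contained in some U_j, and (ii) for each j, the number of indices i with U_i ∩ U_j ≠ ∅ is at most C. Define f_j(x) := dist(x, M ∖ U_j), ξ_j(x) := f_j(x)/Σ_{i=1}^{N} f_i(x), and Θ : M → ℝ^N (with the Euclidean norm) by Θ(x) := Σ_{j=1}^{N} ξ_j(x) · ε e_j, where e_j is the j-th standard basis vector. Then there exists a constant C̃ depending only on C such that Θ is C̃-Lipschitz. -/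
open Metric Set

/-!
Each `f_j = dist(·, M ∖ U_j)` is 1-Lipschitz and vanishes off `U_j`. If `B(z, ε) ⊆ U_{j₀}`, then
`∑ f_i(z) ≥ f_{j₀}(z) ≥ ε`, and every `j` with `f_j(z) ≠ 0` has `z ∈ U_j ∩ U_{j₀}`, so at most `C`
of the `f_j` are nonzero at `z`. Hence `(f_j)` moves by at most `2C d(x, y)` in `ℓ¹`; dividing by
sums bounded below by `ε` costs a factor `2/ε`, and `‖Θ x - Θ y‖ ≤ ε ‖ξ x - ξ y‖₁`, so `C̃ = 4C`.
-/

section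

open Finset

variable {ι M : Type*} [Fintype ι] [PseudoMetricSpace M]

theorem sum_abs_sub_le_of_card_support_le {f : ι → M → ℝ} {K : ℝ}
    (hf : ∀ j, LipschitzWith 1 (f j))
    (hK : ∀ z, (#{j | f j z ≠ 0} : ℝ) ≤ K) (x y : M) :
    ∑ j, |f j x - f j y| ≤ 2 * K * dist x y := by
  have hterm : ∀ j, |f j x - f j y| ≤
      (if f j x ≠ 0 then dist x y else 0) + (if f j y ≠ 0 then dist x y else 0) := by
    intro j
    have hlip : |f j x - f j y| ≤ dist x y := by
      simpa [Real.dist_eq] using (hf j).dist_le_mul x y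
    by_cases hx : f j x = 0 <;> by_cases hy : f j y = 0 <;> simp [hx, hy] at hlip ⊢ <;>
      linarith [dist_nonneg (x := x) (y := y)]
  calc ∑ j, |f j x - f j y|
      ≤ ∑ j, ((if f j x ≠ 0 then dist x y else 0) + (if f j y ≠ 0 then dist x y else 0)) :=
        sum_le_sum fun j _ => hterm j
    _ = ((#{j | f j x ≠ 0} : ℝ) + #{j | f j y ≠ 0}) * dist x y := by
        rw [sum_add_distrib, ← sum_filter, ← sum_filter, sum_const, sum_const, nsmul_eq_mul,
          nsmul_eq_mul, add_mul]
    _ ≤ 2 * K * dist x y := by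
        gcongr
        linarith [hK x, hK y]

theorem sum_abs_div_sum_sub_div_sum_le {a b : ι → ℝ} (ha : 0 < ∑ i, a i) (hb : 0 < ∑ i, b i)
    (hb0 : ∀ j, 0 ≤ b j) :
    ∑ j, |a j / ∑ i, a i - b j / ∑ i, b i| ≤ 2 * (∑ j, |a j - b j|) / ∑ i, a i := by
  set A := ∑ i, a i
  set B := ∑ i, b i
  have hterm : ∀ j, |a j / A - b j / B| ≤ |a j - b j| / A + b j / B * (|A - B| / A) := by
    intro j
    calc |a j / A - b j / B| = |(a j - b j) / A + b j / B * ((B - A) / A)| := by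
          congr 1; field_simp; ring
      _ ≤ |(a j - b j) / A| + |b j / B * ((B - A) / A)| := abs_add_le _ _
      _ = |a j - b j| / A + b j / B * (|A - B| / A) := by
          rw [abs_mul, abs_div, abs_div, abs_div, abs_of_pos ha, abs_of_pos hb,
            abs_of_nonneg (hb0 j), abs_sub_comm B A]
  have hAB : |A - B| ≤ ∑ j, |a j - b j| := by
    simpa only [A, B, ← sum_sub_distrib] using abs_sum_le_sum_abs _ _
  calc ∑ j, |a j / A - b j / B|
      ≤ ∑ j, (|a j - b j| / A + b j / B * (|A - B| / A)) := sum_le_sum fun j _ => hterm j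
    _ = (∑ j, |a j - b j|) / A + |A - B| / A := by
        rw [sum_add_distrib, ← sum_div, ← sum_mul, ← sum_div, div_self hb.ne', one_mul]
    _ ≤ 2 * (∑ j, |a j - b j|) / A := by
        rw [two_mul, add_div]; gcongr

theorem dist_sum_smul_le {E : Type*} [SeminormedAddCommGroup E] [NormedSpace ℝ E]
    (c d : ι → ℝ) {v : ι → E} {r : ℝ} (hv : ∀ j, ‖v j‖ ≤ r) :
    dist (∑ j, c j • v j) (∑ j, d j • v j) ≤ r * ∑ j, |c j - d j| := by
  rw [dist_eq_norm, ← sum_sub_distrib, mul_sum]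
  refine (norm_sum_le _ _).trans (sum_le_sum fun j _ => ?_)
  rw [← sub_smul, norm_smul, Real.norm_eq_abs, mul_comm]
  exact mul_le_mul_of_nonneg_right (hv j) (abs_nonneg _)

theorem le_infDist_compl_of_ball_subset {U : Set M} {p : M} {ε : ℝ} (hU : U ≠ univ)
    (h : ball p ε ⊆ U) : ε ≤ infDist p Uᶜ :=
  (le_infDist (nonempty_compl.2 hU)).2 fun _ hy => not_lt.1 fun hlt => hy (h (mem_ball'.2 hlt))

theorem card_filter_infDist_compl_ne_zero_le {U : ι → Set M} {z : M} {j₀ : ι} (hz : z ∈ U j₀) :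
    #{j | infDist z (U j)ᶜ ≠ 0} ≤ {i | (U i ∩ U j₀).Nonempty}.ncard := by
  rw [← Set.ncard_coe_finset]
  refine Set.ncard_le_ncard (fun j hj => ⟨z, ?_, hz⟩) (Set.toFinite _)
  by_contra hzj
  exact (mem_filter.1 (mem_coe.1 hj)).2 (infDist_zero_of_mem hzj)

theorem sum_abs_div_sum_sub_div_sum_le_of_lipschitz {f : ι → M → ℝ} {K ε : ℝ}
    (hf : ∀ j, LipschitzWith 1 (f j)) (hf0 : ∀ j z, 0 ≤ f j z) (hε : 0 < ε)
    (hS : ∀ z, ε ≤ ∑ i, f i z) (hK : ∀ z, (#{j | f j z ≠ 0} : ℝ) ≤ K) (x y : M) :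
    ∑ j, |f j x / ∑ i, f i x - f j y / ∑ i, f i y| ≤ 4 * K / ε * dist x y := by
  have hK0 : 0 ≤ K := (Nat.cast_nonneg _).trans (hK x)
  calc _ ≤ 2 * (∑ j, |f j x - f j y|) / ∑ i, f i x :=
        sum_abs_div_sum_sub_div_sum_le (hε.trans_le (hS x)) (hε.trans_le (hS y)) (hf0 · y)
    _ ≤ 2 * (2 * K * dist x y) / ε := by
        gcongr
        · exact sum_abs_sub_le_of_card_support_le hf hK x y
        · exact hS x
    _ = 4 * K / ε * dist x y := by ring

end

/-- **Claim.** Let `C, ε > 0` and let `{U_j}_{j=1}^N` be a finite open covering of a metric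
space `M` by proper open subsets such that every `ε`-ball is contained in some `U_j` and
each `U_j` meets at most `C` of the `U_i`.  With `f_j(x) = dist(x, M ∖ U_j)`,
`ξ_j = f_j / ∑ᵢ f_i`, and `Θ(x) = ∑_j ξ_j(x) • (ε e_j) ∈ ℝ^N` (Euclidean norm),
there is a constant `C̃` depending only on `C` such that `Θ` is `C̃`-Lipschitz. -/
theorem theta_is_lipschitz :
    ∀ C : ℝ, 0 < C → ∃ Ct : ℝ, 0 < Ct ∧
      ∀ (ε : ℝ), 0 < ε →
      ∀ (M : Type*) [MetricSpace M] (N : ℕ) (U : Fin N → Set M),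
        (∀ j, IsOpen (U j)) →
        (∀ j, U j ≠ Set.univ) →
        ((⋃ j, U j) = Set.univ) →
        (∀ p : M, ∃ j, ball p ε ⊆ U j) →
        (∀ j, (({i | (U i ∩ U j).Nonempty}.ncard : ℝ) ≤ C)) →
        ∀ x y : M,
          dist
            (∑ j, (infDist x (U j)ᶜ / ∑ i, infDist x (U i)ᶜ) •
              (ε • EuclideanSpace.single j (1 : ℝ)))
            (∑ j, (infDist y (U j)ᶜ / ∑ i, infDist y (U i)ᶜ) •
              (ε • EuclideanSpace.single j (1 : ℝ)))
            ≤ Ct * dist x y := by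
  intro C hC
  refine ⟨4 * C, by positivity, ?_⟩
  intro ε hε M _ N U _ hUne _ hball hcard x y
  set f : Fin N → M → ℝ := fun j z => infDist z (U j)ᶜ
  have hS : ∀ z, ε ≤ ∑ i, f i z := fun z => by
    obtain ⟨j, hj⟩ := hball z
    exact (le_infDist_compl_of_ball_subset (hUne j) hj).trans
      (Finset.single_le_sum (f := (f · z)) (fun i _ => infDist_nonneg) (Finset.mem_univ j))
  have hK : ∀ z, ((Finset.univ.filter (f · z ≠ 0)).card : ℝ) ≤ C := fun z => by
    obtain ⟨j, hj⟩ := hball z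
    exact (Nat.cast_le.2 (card_filter_infDist_compl_ne_zero_le (hj (mem_ball_self hε)))).trans
      (hcard j)
  calc _ ≤ ε * ∑ j, |f j x / ∑ i, f i x - f j y / ∑ i, f i y| :=
        dist_sum_smul_le _ _ fun j => by simp [norm_smul, abs_of_pos hε]
    _ ≤ ε * (4 * C / ε * dist x y) := by
        gcongr
        exact sum_abs_div_sum_sub_div_sum_le_of_lipschitz (fun _ => lipschitz_infDist_pt _)
          (fun _ _ => infDist_nonneg) hε hS hK x y
    _ = 4 * C * dist x y := by field_simp
end

section
/- For every C > 0 and every integer n ≥ 1 there exists C̃ > 0, depending only on C and n, with the following property: let ε > 0, let Δ := {x ∈ ℝ^{n+1} : x_i ≥ 0 for all i, Σ_i x_i = ε} be the ε-scaled standard n-simplex with the Euclidean metric, and let ∂Δ := {x ∈ Δ : x_i = 0 for some i}. Let M be a metric space, U ⊆ M, p ∈ U, and let φ : U × [0,ε] → U be a C-Lipschitz map (with the L¹ metric on the product) such that φ(x,0) = x for all x ∈ U and φ(x,t) = p whenever t ∈ [ε/2, ε]. Then every C-Lipschitz map f : ∂Δ → U extends to a C̃-Lipschitz map f̃ : Δ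 → U with f̃|_{∂Δ} = f. -/
set_option maxHeartbeats 2000000
open Metric Set

/-- The `ε`-scaled standard `n`-simplex in `ℝ^{n+1}` with the Euclidean metric. -/
def scaledSimplex (n : ℕ) (ε : ℝ) : Set (EuclideanSpace ℝ (Fin (n + 1))) :=
  {x | (∀ i, 0 ≤ x i) ∧ ∑ i, x i = ε}

/-- The boundary of the `ε`-scaled standard `n`-simplex. -/
def scaledSimplexBdry (n : ℕ) (ε : ℝ) : Set (EuclideanSpace ℝ (Fin (n + 1))) :=
  {x | x ∈ scaledSimplex n ε ∧ ∃ i, x i = 0}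

noncomputable def mmin {n : ℕ} (x : EuclideanSpace ℝ (Fin (n + 1))) : ℝ :=
  Finset.univ.inf' ⟨0, Finset.mem_univ 0⟩ x

lemma mmin_le {n : ℕ} (x : EuclideanSpace ℝ (Fin (n + 1))) (i : Fin (n+1)) :
    mmin x ≤ x i := Finset.inf'_le _ (Finset.mem_univ i)

lemma exists_mmin {n : ℕ} (x : EuclideanSpace ℝ (Fin (n + 1))) :
    ∃ i, x i = mmin x := by
  obtain ⟨i, -, h⟩ := Finset.exists_mem_eq_inf' ⟨0, Finset.mem_univ 0⟩ x
  exact ⟨i, h.symm⟩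

lemma coord_abs_le {n : ℕ} (x y : EuclideanSpace ℝ (Fin (n+1))) (i : Fin (n+1)) :
    |x i - y i| ≤ dist x y := by
  rw [EuclideanSpace.dist_eq, ← Real.sqrt_sq_eq_abs]
  apply Real.sqrt_le_sqrt
  have : (x i - y i)^2 = dist (x i) (y i) ^ 2 := by rw [Real.dist_eq, sq_abs]
  rw [this]
  exact Finset.single_le_sum (f := fun j => dist (x j) (y j) ^ 2)
    (fun j _ => sq_nonneg _) (Finset.mem_univ i)

lemma mmin_lip {n : ℕ} (x y : EuclideanSpace ℝ (Fin (n+1))) :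
    |mmin x - mmin y| ≤ dist x y := by
  rw [abs_sub_le_iff]
  constructor
  · obtain ⟨j, hj⟩ := exists_mmin y
    have h1 := mmin_le x j
    have h2 := le_abs_self (x j - y j)
    have h3 := coord_abs_le x y j
    linarith
  · obtain ⟨j, hj⟩ := exists_mmin x
    have h1 := mmin_le y j
    have h2 := neg_abs_le (x j - y j)
    have h3 := coord_abs_le x y j
    linarith

lemma mmin_continuous {n : ℕ} : Continuous (mmin (n := n)) := by
  apply LipschitzWith.continuous (K := 1)
  apply LipschitzWith.of_dist_le_mul
  intro x y
  rw [Real.dist_eq]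
  simpa using mmin_lip x y

/-- **Proposition (Lipschitz extension over a simplex).** For `C > 0` and `n ≥ 1` there is
`C̃ > 0` depending only on `C` and `n` such that: for any `ε > 0`, any metric space `M`,
any `U ⊆ M` with `p ∈ U`, and any `C`-Lipschitz map `φ : U × [0,ε] → U` (L¹ product metric)
with `φ(x,0) = x` and `φ(x,t) = p` for `t ∈ [ε/2, ε]`, every `C`-Lipschitz map
`f : ∂Δ → U` on the boundary of the `ε`-scaled standard `n`-simplex extends to a
`C̃`-Lipschitz map `f̃ : Δ → U` with `f̃|_{∂Δ} = f`. -/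
theorem lipschitz_extension_simplex :
    ∀ C : ℝ, 0 < C → ∀ n : ℕ, 1 ≤ n → ∃ Ct : ℝ, 0 < Ct ∧
      ∀ ε : ℝ, 0 < ε →
      ∀ (M : Type*) [MetricSpace M] (U : Set M) (p : M), p ∈ U →
      ∀ φ : M → ℝ → M,
        (∀ x ∈ U, ∀ t ∈ Icc (0 : ℝ) ε, φ x t ∈ U) →
        (∀ x ∈ U, ∀ x' ∈ U, ∀ s ∈ Icc (0 : ℝ) ε, ∀ s' ∈ Icc (0 : ℝ) ε,
          dist (φ x s) (φ x' s') ≤ C * (dist x x' + |s - s'|)) →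
        (∀ x ∈ U, φ x 0 = x) →
        (∀ x ∈ U, ∀ t ∈ Icc (ε / 2) ε, φ x t = p) →
      ∀ f : EuclideanSpace ℝ (Fin (n + 1)) → M,
        (∀ x ∈ scaledSimplexBdry n ε, f x ∈ U) →
        (∀ x ∈ scaledSimplexBdry n ε, ∀ x' ∈ scaledSimplexBdry n ε,
          dist (f x) (f x') ≤ C * dist x x') →
        ∃ ft : EuclideanSpace ℝ (Fin (n + 1)) → M,
          (∀ x ∈ scaledSimplex n ε, ft x ∈ U) ∧
          (∀ x ∈ scaledSimplex n ε, ∀ x' ∈ scaledSimplex n ε,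
            dist (ft x) (ft x') ≤ Ct * dist x x') ∧
          (∀ x ∈ scaledSimplexBdry n ε, ft x = f x) := by
  intro C hC n hn
  classical
  set Lr : ℝ := ((n:ℝ)+1) * (4*(n:ℝ)+12) with hLr
  set c : ℝ := 2*((n:ℝ)+1) with hc
  have hLrpos : 0 < Lr := by positivity
  have hcpos : 0 < c := by positivity
  refine ⟨C*C*Lr + C*c, by positivity, ?_⟩
  intro ε hε M _ U p hp φ hφU hφlip hφ0 hφp f hfU hflip
  set τ : ℝ := ε / (2*((n:ℝ)+1)) with hτdef
  have hτ : 0 < τ := by positivity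
  have hcτ : c * τ = ε := by
    rw [hc, hτdef]; field_simp
  -- the retraction
  set r : EuclideanSpace ℝ (Fin (n+1)) → EuclideanSpace ℝ (Fin (n+1)) :=
    fun x => WithLp.toLp 2 (fun i => ε * (x i - mmin x) / (ε - ((n:ℝ)+1) * mmin x)) with hrdef
  set ft : EuclideanSpace ℝ (Fin (n+1)) → M :=
    fun x => if mmin x ≤ τ then φ (f (r x)) (c * mmin x) else p with hftdef
  -- basic facts
  have hcoord_ub : ∀ x ∈ scaledSimplex n ε, ∀ i, x i ≤ ε := by
    intro x hx i
    rw [← hx.2]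
    exact Finset.single_le_sum (f := fun j => x j) (fun j _ => hx.1 j) (Finset.mem_univ i)
  have hm0 : ∀ x ∈ scaledSimplex n ε, 0 ≤ mmin x := by
    intro x hx
    obtain ⟨j, hj⟩ := exists_mmin x
    rw [← hj]; exact hx.1 j
  have hd_lb : ∀ x : EuclideanSpace ℝ (Fin (n+1)), mmin x ≤ τ →
      ε/2 ≤ ε - ((n:ℝ)+1) * mmin x := by
    intro x hm
    have h1 : ((n:ℝ)+1) * mmin x ≤ ((n:ℝ)+1) * τ :=
      mul_le_mul_of_nonneg_left hm (by positivity)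
    have h2 : ((n:ℝ)+1) * τ = ε/2 := by rw [hτdef]; field_simp
    linarith
  have hd_ub : ∀ x ∈ scaledSimplex n ε, ε - ((n:ℝ)+1) * mmin x ≤ ε := by
    intro x hx
    have := hm0 x hx
    nlinarith
  have hr_mem : ∀ x ∈ scaledSimplex n ε, mmin x ≤ τ → r x ∈ scaledSimplexBdry n ε := by
    intro x hx hm
    have hd : (0:ℝ) < ε - ((n:ℝ)+1) * mmin x := lt_of_lt_of_le (by positivity) (hd_lb x hm)
    refine ⟨⟨fun i => ?_, ?_⟩, ?_⟩
    · exact div_nonneg (mul_nonneg hε.le (sub_nonneg.2 (mmin_le x i))) hd.le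
    · show ∑ i, ε * (x i - mmin x) / (ε - ((n:ℝ)+1) * mmin x) = ε
      rw [← Finset.sum_div]
      rw [← Finset.mul_sum]
      rw [Finset.sum_sub_distrib, Finset.sum_const, hx.2]
      simp only [Finset.card_univ, Fintype.card_fin, nsmul_eq_mul]
      rw [div_eq_iff hd.ne']
      push_cast
      ring
    · obtain ⟨j, hj⟩ := exists_mmin x
      exact ⟨j, by show ε * (x j - mmin x) / _ = 0; rw [hj]; simp⟩
  have hbdry_m : ∀ x ∈ scaledSimplexBdry n ε, mmin x = 0 := by
    intro x hx
    obtain ⟨hxΔ, j, hj⟩ := hx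
    have h1 := mmin_le x j
    have h2 := hm0 x hxΔ
    linarith [hj ▸ h1]
  have hr_id : ∀ x ∈ scaledSimplexBdry n ε, r x = x := by
    intro x hx
    ext i
    show ε * (x i - mmin x) / (ε - ((n:ℝ)+1) * mmin x) = x i
    rw [hbdry_m x hx]
    rw [sub_zero, mul_zero, sub_zero, mul_comm, mul_div_assoc, div_self hε.ne', mul_one]
  have ht_mem : ∀ x ∈ scaledSimplex n ε, mmin x ≤ τ → c * mmin x ∈ Icc (0:ℝ) ε := by
    intro x hx hm
    constructor
    · exact mul_nonneg hcpos.le (hm0 x hx)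
    · calc c * mmin x ≤ c * τ := mul_le_mul_of_nonneg_left hm hcpos.le
        _ = ε := hcτ
  have hftU : ∀ x ∈ scaledSimplex n ε, ft x ∈ U := by
    intro x hx
    show (if mmin x ≤ τ then φ (f (r x)) (c * mmin x) else p) ∈ U
    split
    · rename_i h
      exact hφU _ (hfU _ (hr_mem x hx h)) _ (ht_mem x hx h)
    · exact hp
  -- Lipschitz bound for r
  have hr_lip : ∀ x ∈ scaledSimplex n ε, ∀ y ∈ scaledSimplex n ε,
      mmin x ≤ τ → mmin y ≤ τ → dist (r x) (r y) ≤ Lr * dist x y := by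
    intro x hx y hy hmx hmy
    have hD : (0:ℝ) ≤ dist x y := dist_nonneg
    set D := dist x y with hDdef
    have hd1 : ε/2 ≤ ε - ((n:ℝ)+1) * mmin x := hd_lb x hmx
    have hd2 : ε/2 ≤ ε - ((n:ℝ)+1) * mmin y := hd_lb y hmy
    have hd1' : ε - ((n:ℝ)+1) * mmin x ≤ ε := hd_ub x hx
    have hd2' : ε - ((n:ℝ)+1) * mmin y ≤ ε := hd_ub y hy
    have hd1pos : (0:ℝ) < ε - ((n:ℝ)+1) * mmin x := lt_of_lt_of_le (by positivity) hd1
    have hd2pos : (0:ℝ) < ε - ((n:ℝ)+1) * mmin y := lt_of_lt_of_le (by positivity) hd2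
    have hcoord : ∀ i, |r x i - r y i| ≤ (4*(n:ℝ)+12) * D := by
      intro i
      set a : ℝ := x i - mmin x with ha
      set b : ℝ := y i - mmin y with hb
      set d1 : ℝ := ε - ((n:ℝ)+1) * mmin x with hd1def
      set d2 : ℝ := ε - ((n:ℝ)+1) * mmin y with hd2def
      have key : r x i - r y i = ε * ((a - b)*d2 + b*(d2 - d1)) / (d1 * d2) := by
        show ε * (x i - mmin x) / (ε - ((n:ℝ)+1) * mmin x)
          - ε * (y i - mmin y) / (ε - ((n:ℝ)+1) * mmin y)
          = ε * ((a - b)*d2 + b*(d2 - d1)) / (d1 * d2)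
        rw [ha, hb, hd1def, hd2def]
        have e1 : ε - ((n:ℝ)+1) * mmin x ≠ 0 := hd1pos.ne'
        have e2 : ε - ((n:ℝ)+1) * mmin y ≠ 0 := hd2pos.ne'
        rw [div_sub_div _ _ e1 e2]
        ring
      have hab : |a - b| ≤ 2 * D := by
        have h1 := coord_abs_le x y i
        have h2 := mmin_lip x y
        have : a - b = (x i - y i) - (mmin x - mmin y) := by rw [ha, hb]; ring
        rw [this]
        calc |(x i - y i) - (mmin x - mmin y)| ≤ |x i - y i| + |mmin x - mmin y| :=
            abs_sub _ _
          _ ≤ 2 * D := by rw [hDdef]; linarith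
      have hbnn : 0 ≤ b := sub_nonneg.2 (mmin_le y i)
      have hbub : b ≤ ε := by
        have := hcoord_ub y hy i
        have := hm0 y hy
        rw [hb]; linarith
      have hdd : |d2 - d1| ≤ ((n:ℝ)+1) * D := by
        have h2 := mmin_lip x y
        have : d2 - d1 = ((n:ℝ)+1) * (mmin x - mmin y) := by rw [hd1def, hd2def]; ring
        rw [this, abs_mul, abs_of_pos (by positivity : (0:ℝ) < (n:ℝ)+1)]
        exact mul_le_mul_of_nonneg_left (by rw [hDdef]; exact h2) (by positivity)
      have hnum : |(a - b)*d2 + b*(d2 - d1)| ≤ 2*D*ε + ε*(((n:ℝ)+1)*D) := by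
        calc |(a - b)*d2 + b*(d2 - d1)| ≤ |(a-b)*d2| + |b*(d2-d1)| := abs_add_le _ _
          _ = |a-b| * |d2| + |b| * |d2-d1| := by rw [abs_mul, abs_mul]
          _ ≤ (2*D) * ε + ε * (((n:ℝ)+1)*D) := by
              gcongr
              · rw [abs_of_pos hd2pos]; exact hd2'
              · rw [abs_of_nonneg hbnn]; exact hbub
          _ = 2*D*ε + ε*(((n:ℝ)+1)*D) := by ring
      rw [key, abs_div, abs_mul, abs_of_pos hε, abs_of_pos (mul_pos hd1pos hd2pos)]
      calc ε * |(a - b)*d2 + b*(d2 - d1)| / (d1 * d2)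
          ≤ ε * (2*D*ε + ε*(((n:ℝ)+1)*D)) / (ε/2 * (ε/2)) := by
            apply div_le_div₀ (by positivity)
              (mul_le_mul_of_nonneg_left hnum hε.le) (by positivity)
            exact mul_le_mul hd1 hd2 (by positivity) hd1pos.le
        _ = (4*(n:ℝ)+12) * D := by field_simp; ring
    -- sum up
    have hBnn : (0:ℝ) ≤ (4*(n:ℝ)+12) * D := by positivity
    rw [EuclideanSpace.dist_eq]
    have hstep : ∀ i : Fin (n+1), i ∈ Finset.univ →
        dist (r x i) (r y i) ^ 2 ≤ ((4*(n:ℝ)+12) * D)^2 := by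
      intro i _
      rw [Real.dist_eq]
      exact pow_le_pow_left₀ (abs_nonneg _) (hcoord i) 2
    have hsum : ∑ i, dist (r x i) (r y i) ^ 2 ≤ ((n:ℝ)+1) * ((4*(n:ℝ)+12) * D)^2 := by
      have h1 := Finset.sum_le_sum hstep
      have h2 : ∑ _i : Fin (n+1), ((4*(n:ℝ)+12) * D)^2
          = ((n:ℝ)+1) * ((4*(n:ℝ)+12) * D)^2 := by
        rw [Finset.sum_const, Finset.card_univ, Fintype.card_fin, nsmul_eq_mul]
        push_cast; ring
      linarith [h1, le_of_eq h2]
    have hfin : Real.sqrt (∑ i, dist (r x i) (r y i) ^ 2) ≤ Real.sqrt ((Lr * D)^2) := by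
      apply Real.sqrt_le_sqrt
      refine le_trans hsum ?_
      rw [hLr]
      nlinarith [sq_nonneg D, Nat.cast_nonneg (α := ℝ) n]
    rw [Real.sqrt_sq (by positivity : (0:ℝ) ≤ Lr * D)] at hfin
    exact hfin
  -- Lipschitz inside region A
  have hA : ∀ x ∈ scaledSimplex n ε, ∀ y ∈ scaledSimplex n ε,
      mmin x ≤ τ → mmin y ≤ τ →
      dist (ft x) (ft y) ≤ (C*C*Lr + C*c) * dist x y := by
    intro x hx y hy hmx hmy
    have hfx : ft x = φ (f (r x)) (c * mmin x) := by rw [hftdef]; simp only [if_pos hmx]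
    have hfy : ft y = φ (f (r y)) (c * mmin y) := by rw [hftdef]; simp only [if_pos hmy]
    rw [hfx, hfy]
    have h1 : dist (φ (f (r x)) (c * mmin x)) (φ (f (r y)) (c * mmin y))
        ≤ C * (dist (f (r x)) (f (r y)) + |c * mmin x - c * mmin y|) :=
      hφlip _ (hfU _ (hr_mem x hx hmx)) _ (hfU _ (hr_mem y hy hmy))
        _ (ht_mem x hx hmx) _ (ht_mem y hy hmy)
    have h2 : dist (f (r x)) (f (r y)) ≤ C * (Lr * dist x y) := by
      calc dist (f (r x)) (f (r y)) ≤ C * dist (r x) (r y) :=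
          hflip _ (hr_mem x hx hmx) _ (hr_mem y hy hmy)
        _ ≤ C * (Lr * dist x y) :=
          mul_le_mul_of_nonneg_left (hr_lip x hx y hy hmx hmy) hC.le
    have h3 : |c * mmin x - c * mmin y| ≤ c * dist x y := by
      have : c * mmin x - c * mmin y = c * (mmin x - mmin y) := by ring
      rw [this, abs_mul, abs_of_pos hcpos]
      exact mul_le_mul_of_nonneg_left (mmin_lip x y) hcpos.le
    calc dist (φ (f (r x)) (c * mmin x)) (φ (f (r y)) (c * mmin y))
        ≤ C * (C * (Lr * dist x y) + c * dist x y) := by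
          refine h1.trans (mul_le_mul_of_nonneg_left (add_le_add h2 h3) hC.le)
      _ = (C*C*Lr + C*c) * dist x y := by ring
  -- at the threshold, ft = p
  have hthr : ∀ z ∈ scaledSimplex n ε, mmin z = τ → ft z = p := by
    intro z hz hmz
    have hle : mmin z ≤ τ := le_of_eq hmz
    have : ft z = φ (f (r z)) (c * mmin z) := by rw [hftdef]; simp only [if_pos hle]
    rw [this, hmz, hcτ]
    exact hφp _ (hfU _ (hr_mem z hz hle)) _ ⟨by linarith, le_refl ε⟩
  -- cross case
  have hcross : ∀ x ∈ scaledSimplex n ε, ∀ y ∈ scaledSimplex n ε,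
      mmin x ≤ τ → τ < mmin y →
      dist (ft x) (ft y) ≤ (C*C*Lr + C*c) * dist x y := by
    intro x hx y hy hmx hmy
    set g : ℝ → ℝ := fun s => mmin (x + s • (y - x)) with hg
    have hgc : ContinuousOn g (Icc 0 1) := by
      apply Continuous.continuousOn
      exact mmin_continuous.comp (continuous_const.add (continuous_id.smul continuous_const))
    have hg0 : g 0 = mmin x := by rw [hg]; simp
    have hg1 : g 1 = mmin y := by
      rw [hg]
      have : x + (1:ℝ) • (y - x) = y := by simp
      simp [this]
    have hτmem : τ ∈ Icc (g 0) (g 1) := by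
      rw [hg0, hg1]; exact ⟨hmx, hmy.le⟩
    obtain ⟨s, hs, hgs⟩ := intermediate_value_Icc zero_le_one hgc hτmem
    set z := x + s • (y - x) with hz
    have hzapply : ∀ i, z i = x i + s * (y i - x i) := by
      intro i
      rw [hz]
      simp [PiLp.add_apply, PiLp.smul_apply, PiLp.sub_apply, smul_eq_mul]
    have hzΔ : z ∈ scaledSimplex n ε := by
      constructor
      · intro i
        rw [hzapply i]
        have h1 := hx.1 i
        have h2 := hy.1 i
        nlinarith [hs.1, hs.2]
      · show ∑ i, z i = ε
        have h1 : ∑ i, z i = ∑ i, (x i + s * (y i - x i)) :=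
          Finset.sum_congr rfl (fun i _ => hzapply i)
        rw [h1, Finset.sum_add_distrib, ← Finset.mul_sum, Finset.sum_sub_distrib, hx.2, hy.2]
        ring
    have hmz : mmin z = τ := hgs
    have hdxz : dist x z ≤ dist x y := by
      have h1 : z - x = s • (y - x) := by rw [hz]; abel
      calc dist x z = ‖z - x‖ := by rw [dist_eq_norm]; rw [norm_sub_rev]
        _ = ‖s • (y - x)‖ := by rw [h1]
        _ = |s| * ‖y - x‖ := by rw [norm_smul, Real.norm_eq_abs]
        _ ≤ 1 * ‖y - x‖ := by
            apply mul_le_mul_of_nonneg_right _ (norm_nonneg _)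
            rw [abs_of_nonneg hs.1]; exact hs.2
        _ = dist x y := by rw [one_mul, dist_eq_norm, norm_sub_rev]
    have hfty : ft y = p := by
      rw [hftdef]; simp only [if_neg (not_le.2 hmy)]
    have hftz : ft z = p := hthr z hzΔ hmz
    calc dist (ft x) (ft y) = dist (ft x) (ft z) := by rw [hfty, hftz]
      _ ≤ (C*C*Lr + C*c) * dist x z := hA x hx z hzΔ hmx (le_of_eq hmz)
      _ ≤ (C*C*Lr + C*c) * dist x y :=
          mul_le_mul_of_nonneg_left hdxz (by positivity)
  refine ⟨ft, hftU, ?_, ?_⟩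
  · intro x hx y hy
    by_cases hmx : mmin x ≤ τ <;> by_cases hmy : mmin y ≤ τ
    · exact hA x hx y hy hmx hmy
    · exact hcross x hx y hy hmx (not_le.1 hmy)
    · rw [dist_comm (ft x) (ft y), dist_comm x y]
      exact hcross y hy x hx hmy (not_le.1 hmx)
    · have hfx : ft x = p := by rw [hftdef]; simp only [if_neg hmx]
      have hfy : ft y = p := by rw [hftdef]; simp only [if_neg hmy]
      rw [hfx, hfy, dist_self]
      positivity
  · intro x hx
    have hm : mmin x = 0 := hbdry_m x hx
    have hle : mmin x ≤ τ := by rw [hm]; exact hτ.le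
    have : ft x = φ (f (r x)) (c * mmin x) := by rw [hftdef]; simp only [if_pos hle]
    rw [this, hm, mul_zero, hr_id x hx]
    exact hφ0 _ (hfU _ hx)
end

section
/- For every integer n ≥ 1 there exists a constant C > 0, depending only on n, with the following property: for every ε > 0, let Δ := {x ∈ ℝ^{n+1} : x_i ≥ 0 for all i, Σ_i x_i = ε} be the ε-scaled standard n-simplex with the Euclidean metric, let x* be its barycenter, and let ∂Δ := {x ∈ Δ : x_i = 0 for some i}. Every x ∈ Δ ∖ {x*} is uniquely represented as x = t(x)·x* + (1−t(x))·y(x) with y(x) ∈ ∂Δ and t(x) ∈ [0,1). Then the map x ↦ (y(x), ε·t(x)) is a bijection from {x ∈ Δ : t(x) ≤ 1/2} onto ∂Δ × [0, ε/2] which is C-bi-Lipschitz, i.e., both it and its inverse are C-Lipschitz, where ∂Δ × [0, ε/2] carries the L¹ (sum) metric combining the Euclidean metric on ∂Δ and the absolute value on [0, ε/2]. -/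
open Metric Set

lemma coord_abs_le_dist {m : ℕ} (x x' : EuclideanSpace ℝ (Fin m)) (i : Fin m) :
    |x i - x' i| ≤ dist x x' := by
  rw [EuclideanSpace.dist_eq, ← Real.dist_eq, ← Real.sqrt_sq dist_nonneg]
  exact Real.sqrt_le_sqrt (Finset.single_le_sum (f := fun j => dist (x j) (x' j) ^ 2)
    (fun j _ => sq_nonneg _) (Finset.mem_univ i))

lemma norm_le_sum_of_coord_nonneg {m : ℕ} (x : EuclideanSpace ℝ (Fin m)) (h : ∀ i, 0 ≤ x i) :
    ‖x‖ ≤ ∑ i, x i := by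
  rw [EuclideanSpace.norm_eq]
  have h1 : ∀ i, ‖x i‖ = x i := fun i => Real.norm_of_nonneg (h i)
  simp_rw [h1]
  calc Real.sqrt (∑ i, x i ^ 2) ≤ Real.sqrt ((∑ i, x i)^2) :=
        Real.sqrt_le_sqrt (Finset.sum_sq_le_sq_sum_of_nonneg (fun i _ => h i))
    _ = ∑ i, x i := Real.sqrt_sq (Finset.sum_nonneg fun i _ => h i)

set_option maxHeartbeats 1600000 in
/-- **Claim (radial parametrization is bi-Lipschitz).** For every `n ≥ 1` there is `C > 0`
depending only on `n` such that: for every `ε > 0`, if `x*` is the barycenter of the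
`ε`-scaled standard `n`-simplex `Δ` and `t, y` give the (unique) representation
`x = t(x)·x* + (1 − t(x))·y(x)` with `y(x) ∈ ∂Δ`, `t(x) ∈ [0,1)` for `x ∈ Δ ∖ {x*}`
(and `t(x*) = 1`), then `x ↦ (y(x), ε·t(x))` is a `C`-bi-Lipschitz bijection from
`{x ∈ Δ : t(x) ≤ 1/2}` onto `∂Δ × [0, ε/2]` with the L¹ product metric. -/
theorem radial_parametrization_biLipschitz :
    ∀ n : ℕ, 1 ≤ n → ∃ C : ℝ, 0 < C ∧
      ∀ ε : ℝ, 0 < ε →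
      ∀ xstar : EuclideanSpace ℝ (Fin (n + 1)), (∀ i, xstar i = ε / (n + 1)) →
      ∀ (t : EuclideanSpace ℝ (Fin (n + 1)) → ℝ)
        (y : EuclideanSpace ℝ (Fin (n + 1)) → EuclideanSpace ℝ (Fin (n + 1))),
        t xstar = 1 →
        (∀ x ∈ scaledSimplex n ε, x ≠ xstar →
          y x ∈ scaledSimplexBdry n ε ∧ t x ∈ Ico (0 : ℝ) 1 ∧
            x = t x • xstar + (1 - t x) • y x) →
        Set.BijOn (fun x => (y x, ε * t x)) {x ∈ scaledSimplex n ε | t x ≤ 1 / 2}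
          (scaledSimplexBdry n ε ×ˢ Icc (0 : ℝ) (ε / 2)) ∧
        (∀ x ∈ {x ∈ scaledSimplex n ε | t x ≤ 1 / 2},
          ∀ x' ∈ {x ∈ scaledSimplex n ε | t x ≤ 1 / 2},
            dist (y x) (y x') + |ε * t x - ε * t x'| ≤ C * dist x x') ∧
        (∀ x ∈ {x ∈ scaledSimplex n ε | t x ≤ 1 / 2},
          ∀ x' ∈ {x ∈ scaledSimplex n ε | t x ≤ 1 / 2},
            dist x x' ≤ C * (dist (y x) (y x') + |ε * t x - ε * t x'|)) := by
  intro n hn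
  refine ⟨8 * (n + 1), by positivity, ?_⟩
  intro ε hε xstar hstar t y ht1 h
  set c : ℝ := ε / (n + 1) with hcdef
  have hc : (0 : ℝ) < c := by positivity
  have hεc : ε = ((n : ℝ) + 1) * c := by
    rw [hcdef, mul_div_cancel₀ _ (by positivity : ((n : ℝ) + 1) ≠ 0)]
  -- the representation facts hold on the half-domain
  have hrep : ∀ x ∈ scaledSimplex n ε, t x ≤ 1 / 2 →
      y x ∈ scaledSimplexBdry n ε ∧ t x ∈ Ico (0 : ℝ) 1 ∧
        x = t x • xstar + (1 - t x) • y x := by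
    intro x hx hts
    refine h x hx ?_
    intro hxx
    rw [hxx, ht1] at hts; norm_num at hts
  -- coordinates of a convex combination with the barycenter
  have coordfact : ∀ (τ : ℝ) (z : EuclideanSpace ℝ (Fin (n + 1))) (i : Fin (n + 1)),
      (τ • xstar + (1 - τ) • z) i = τ * c + (1 - τ) * z i := by
    intro τ z i
    simp [PiLp.smul_apply, PiLp.add_apply, hstar i, hcdef]
  have hsumc : ∑ _i : Fin (n + 1), c = ε := by
    rw [Finset.sum_const, Finset.card_univ, Fintype.card_fin, nsmul_eq_mul]
    push_cast
    rw [← hεc]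
  -- membership of convex combinations
  have memfact : ∀ τ : ℝ, 0 ≤ τ → τ ≤ 1 → ∀ z ∈ scaledSimplex n ε,
      (τ • xstar + (1 - τ) • z) ∈ scaledSimplex n ε := by
    intro τ hτ0 hτ1 z hz
    constructor
    · intro i
      rw [coordfact]
      have := hz.1 i
      nlinarith
    · simp only [coordfact]
      rw [Finset.sum_add_distrib, ← Finset.mul_sum, ← Finset.mul_sum, hsumc, hz.2]
      ring
  -- coordinates of points in the half-domain
  have coordx : ∀ x ∈ scaledSimplex n ε, t x ≤ 1 / 2 → ∀ i,
      x i = t x * c + (1 - t x) * (y x i) := by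
    intro x hx hts i
    obtain ⟨hb, htI, hrepx⟩ := hrep x hx hts
    nth_rewrite 1 [hrepx]
    exact coordfact _ _ i
  -- lower bound on coordinates
  have lowerx : ∀ x ∈ scaledSimplex n ε, t x ≤ 1 / 2 → ∀ i, t x * c ≤ x i := by
    intro x hx hts i
    obtain ⟨hb, htI, hrepx⟩ := hrep x hx hts
    rw [coordx x hx hts i]
    have h1 : 0 ≤ y x i := hb.1.1 i
    nlinarith [htI.2]
  -- exact value at a vanishing coordinate
  have exactx : ∀ x ∈ scaledSimplex n ε, t x ≤ 1 / 2 → ∃ i, x i = t x * c := by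
    intro x hx hts
    obtain ⟨hb, htI, hrepx⟩ := hrep x hx hts
    obtain ⟨i, hi⟩ := hb.2
    exact ⟨i, by rw [coordx x hx hts i, hi]; ring⟩
  -- Lipschitz estimate for t
  have tLip : ∀ x ∈ scaledSimplex n ε, t x ≤ 1 / 2 → ∀ x' ∈ scaledSimplex n ε, t x' ≤ 1 / 2 →
      |t x - t x'| * c ≤ dist x x' := by
    have key : ∀ x ∈ scaledSimplex n ε, t x ≤ 1 / 2 → ∀ x' ∈ scaledSimplex n ε, t x' ≤ 1 / 2 →
        (t x - t x') * c ≤ dist x x' := by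
      intro x hx htx x' hx' htx'
      obtain ⟨i, hi⟩ := exactx x' hx' htx'
      have h1 : t x * c ≤ x i := lowerx x hx htx i
      have h2 : x i - x' i ≤ |x i - x' i| := le_abs_self _
      have h3 := coord_abs_le_dist x x' i
      nlinarith
    intro x hx htx x' hx' htx'
    rcases le_total (t x) (t x') with hle | hle
    · rw [abs_of_nonpos (by linarith), neg_sub]
      calc (t x' - t x) * c ≤ dist x' x := key x' hx' htx' x hx htx
        _ = dist x x' := dist_comm _ _
    · rw [abs_of_nonneg (by linarith)]
      exact key x hx htx x' hx' htx'
  -- norm bound on simplex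
  have normle : ∀ z ∈ scaledSimplex n ε, ‖z‖ ≤ ε := by
    intro z hz
    calc ‖z‖ ≤ ∑ i, z i := norm_le_sum_of_coord_nonneg z hz.1
      _ = ε := hz.2
  have hxstar_mem : xstar ∈ scaledSimplex n ε := by
    constructor
    · intro i; rw [hstar i]; positivity
    · calc ∑ i, xstar i = ∑ _i : Fin (n + 1), c := by
            apply Finset.sum_congr rfl; intro i _; exact hstar i
        _ = ε := hsumc
  -- bound on ‖xstar - y x'‖
  have hdiffbound : ∀ x' ∈ scaledSimplex n ε, t x' ≤ 1 / 2 → ‖xstar - y x'‖ ≤ 2 * ε := by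
    intro x' hx' htx'
    obtain ⟨hb, _, _⟩ := hrep x' hx' htx'
    calc ‖xstar - y x'‖ ≤ ‖xstar‖ + ‖y x'‖ := norm_sub_le _ _
      _ ≤ ε + ε := add_le_add (normle _ hxstar_mem) (normle _ hb.1)
      _ = 2 * ε := by ring
  -- key vector identity
  have keyid : ∀ x ∈ scaledSimplex n ε, t x ≤ 1 / 2 → ∀ x' ∈ scaledSimplex n ε, t x' ≤ 1 / 2 →
      x - x' = (t x - t x') • (xstar - y x') + (1 - t x) • (y x - y x') := by
    intro x hx htx x' hx' htx'
    obtain ⟨_, _, hrepx⟩ := hrep x hx htx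
    obtain ⟨_, _, hrepx'⟩ := hrep x' hx' htx'
    nth_rewrite 1 [hrepx]
    nth_rewrite 1 [hrepx']
    module
  -- uniqueness of representation
  have uniq : ∀ τ : ℝ, 0 ≤ τ → τ ≤ 1 / 2 → ∀ z ∈ scaledSimplexBdry n ε,
      t (τ • xstar + (1 - τ) • z) = τ ∧ y (τ • xstar + (1 - τ) • z) = z := by
    intro τ hτ0 hτ2 z hz
    set x := τ • xstar + (1 - τ) • z with hxdef
    have hxmem : x ∈ scaledSimplex n ε := memfact τ hτ0 (by linarith) z hz.1
    obtain ⟨i0, hi0⟩ := hz.2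
    have e0 : x i0 = τ * c := by rw [hxdef, coordfact, hi0]; ring
    have hxne : x ≠ xstar := by
      intro hcon
      have h2 : x i0 = c := by rw [hcon, hstar]
      nlinarith
    obtain ⟨hb, htI, hrepx⟩ := h x hxmem hxne
    obtain ⟨i1, hi1⟩ := hb.2
    have e1 : x i1 = t x * c := by
      nth_rewrite 1 [hrepx]
      rw [coordfact, hi1]; ring
    have lower1 : t x * c ≤ x i0 := by
      nth_rewrite 2 [hrepx]
      rw [coordfact]
      have := hb.1.1 i0
      nlinarith [htI.2]
    have lower0 : τ * c ≤ x i1 := by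
      nth_rewrite 1 [hxdef]
      rw [coordfact]
      have := hz.1.1 i1
      nlinarith
    have hteq : t x = τ := by
      rw [e0] at lower1; rw [e1] at lower0
      nlinarith
    refine ⟨hteq, ?_⟩
    have hsmul : (1 - τ) • y x = (1 - τ) • z := by
      have h1 : τ • xstar + (1 - τ) • y x = τ • xstar + (1 - τ) • z := by
        rw [← hteq]
        nth_rewrite 3 [hteq]
        rw [← hrepx, hxdef, hteq]
      exact add_left_cancel h1
    have hne : (1 - τ) ≠ 0 := by linarith
    exact smul_right_injective _ hne hsmul
  refine ⟨⟨?_, ?_, ?_⟩, ?_, ?_⟩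
  · -- MapsTo
    intro x hx
    obtain ⟨hxs, hxt⟩ := hx
    obtain ⟨hb, htI, _⟩ := hrep x hxs hxt
    refine Set.mem_prod.mpr ⟨hb, ⟨mul_nonneg hε.le htI.1, ?_⟩⟩
    nlinarith
  · -- InjOn
    intro x hx x' hx' heq
    obtain ⟨hxs, hxt⟩ := hx
    obtain ⟨hxs', hxt'⟩ := hx'
    have h1 : y x = y x' := congrArg Prod.fst heq
    have h2 : ε * t x = ε * t x' := congrArg Prod.snd heq
    have h3 : t x = t x' := mul_left_cancel₀ hε.ne' h2
    obtain ⟨_, _, hrepx⟩ := hrep x hxs hxt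
    obtain ⟨_, _, hrepx'⟩ := hrep x' hxs' hxt'
    rw [hrepx, hrepx', h1, h3]
  · -- SurjOn
    rintro ⟨z, s⟩ ⟨hz, hs0, hs2⟩
    set τ := s / ε with hτdef
    have hτ0 : 0 ≤ τ := div_nonneg hs0 hε.le
    have hτ2 : τ ≤ 1 / 2 := by
      rw [hτdef, div_le_iff₀ hε]
      linarith
    set x := τ • xstar + (1 - τ) • z with hxdef
    obtain ⟨ht, hy⟩ := uniq τ hτ0 hτ2 z hz
    refine ⟨x, ⟨memfact τ hτ0 (by linarith) z hz.1, by rw [ht]; exact hτ2⟩, ?_⟩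
    simp only
    rw [ht, hy, hτdef, mul_div_cancel₀ _ hε.ne']
  · -- forward Lipschitz
    intro x hx x' hx'
    obtain ⟨hxs, hxt⟩ := hx
    obtain ⟨hxs', hxt'⟩ := hx'
    obtain ⟨hb, htI, hrepx⟩ := hrep x hxs hxt
    obtain ⟨hb', htI', hrepx'⟩ := hrep x' hxs' hxt'
    set d := dist x x' with hddef
    have hd0 : 0 ≤ d := dist_nonneg
    set D := |t x - t x'| with hDdef
    have hD0 : 0 ≤ D := abs_nonneg _
    have hDc : D * c ≤ d := tLip x hxs hxt x' hxs' hxt'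
    have hsmulnorm : (1 - t x) * ‖y x - y x'‖ ≤ d + D * (2 * ε) := by
      have hid := keyid x hxs hxt x' hxs' hxt'
      have h1 : (1 - t x) • (y x - y x') = (x - x') - (t x - t x') • (xstar - y x') := by
        rw [hid]; abel
      calc (1 - t x) * ‖y x - y x'‖
          = ‖(1 - t x) • (y x - y x')‖ := by
            rw [norm_smul, Real.norm_of_nonneg (by linarith : (0:ℝ) ≤ 1 - t x)]
        _ = ‖(x - x') - (t x - t x') • (xstar - y x')‖ := by rw [h1]
        _ ≤ ‖x - x'‖ + ‖(t x - t x') • (xstar - y x')‖ := norm_sub_le _ _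
        _ = d + D * ‖xstar - y x'‖ := by
            rw [norm_smul, Real.norm_eq_abs, ← hDdef, hddef, dist_eq_norm]
        _ ≤ d + D * (2 * ε) :=
            add_le_add le_rfl (mul_le_mul_of_nonneg_left (hdiffbound x' hxs' hxt') hD0)
    have hyy : dist (y x) (y x') ≤ 2 * (d + D * (2 * ε)) := by
      rw [dist_eq_norm]
      nlinarith [norm_nonneg (y x - y x')]
    have habs : |ε * t x - ε * t x'| = ε * D := by
      rw [← mul_sub, abs_mul, abs_of_pos hε, hDdef]
    rw [habs]
    have hn1 : (1 : ℝ) ≤ (n : ℝ) := by exact_mod_cast hn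
    nlinarith [mul_le_mul_of_nonneg_left hDc (show (0:ℝ) ≤ 5 * ((n:ℝ) + 1) by positivity)]
  · -- inverse Lipschitz
    intro x hx x' hx'
    obtain ⟨hxs, hxt⟩ := hx
    obtain ⟨hxs', hxt'⟩ := hx'
    obtain ⟨hb, htI, hrepx⟩ := hrep x hxs hxt
    have hid := keyid x hxs hxt x' hxs' hxt'
    have habs : |ε * t x - ε * t x'| = ε * |t x - t x'| := by
      rw [← mul_sub, abs_mul, abs_of_pos hε]
    have hbound : dist x x' ≤ |t x - t x'| * (2 * ε) + dist (y x) (y x') := by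
      calc dist x x' = ‖x - x'‖ := dist_eq_norm _ _
        _ = ‖(t x - t x') • (xstar - y x') + (1 - t x) • (y x - y x')‖ := by rw [hid]
        _ ≤ ‖(t x - t x') • (xstar - y x')‖ + ‖(1 - t x) • (y x - y x')‖ := norm_add_le _ _
        _ = |t x - t x'| * ‖xstar - y x'‖ + (1 - t x) * ‖y x - y x'‖ := by
            rw [norm_smul, norm_smul, Real.norm_eq_abs,
              Real.norm_of_nonneg (by linarith [htI.1] : (0:ℝ) ≤ 1 - t x)]
        _ ≤ |t x - t x'| * (2 * ε) + 1 * ‖y x - y x'‖ := by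
            refine add_le_add
              (mul_le_mul_of_nonneg_left (hdiffbound x' hxs' hxt') (abs_nonneg _)) ?_
            have := norm_nonneg (y x - y x')
            nlinarith [htI.1]
        _ = |t x - t x'| * (2 * ε) + dist (y x) (y x') := by rw [one_mul, dist_eq_norm]
    rw [habs]
    have hn1 : (1 : ℝ) ≤ (n : ℝ) := by exact_mod_cast hn
    have h1 : 0 ≤ dist (y x) (y x') := dist_nonneg
    have h2 : 0 ≤ ε * |t x - t x'| := mul_nonneg hε.le (abs_nonneg _)
    nlinarith
end

section
/- For every C > 0 and every integer n ≥ 0 there exist C̃ > 0 and ε₀ > 0, depending only on C and n, with the following property: let M be a locally C-Lipschitz contractible metric space, let 0 < ε < ε₀, let Δ := {x ∈ ℝ^{n+1} : x_i ≥ 0 for all i, Σ_i x_i = ε} be the ε-scaled standard n-simplex with the Euclidean metric, and let f₀, f₁ : Δ → M be C-Lipschitz maps with sup_{x∈Δ} d(f₀(x), f₁(x)) ≤ ε. Then f₀ and f₁ are (C̃, ε)-Lipschitz homotopic. -/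
/-!
A contraction `φ` of a neighbourhood `U` of both images to a point `p` yields the homotopy:
run `φ` forward from `f₀` to `p` during the first half of `[0, ε]` and backward from `p` to `f₁`
during the second half. The two halves agree at the seam, and gluing Lipschitz homotopies along
a common time slice costs nothing in the Lipschitz constant, by the triangle inequality through
the seam. Because the simplex has diameter at most `2 ε`, a ball of radius `(2 C + 2) ε` around
`f₀` of a vertex contains both images, and it is admissible as long as `(2 C + 2) ε < C⁻¹`.
-/

open Metric Set

section LipHomotopy

variable {X Y M : Type*} [PseudoMetricSpace X] [PseudoMetricSpace Y] [PseudoMetricSpace M]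

def IsLipHomotopyOn (K : ℝ) (S : Set X) (I : Set ℝ) (h : X → ℝ → M) : Prop :=
  ∀ x ∈ S, ∀ x' ∈ S, ∀ s ∈ I, ∀ s' ∈ I, dist (h x s) (h x' s') ≤ K * (dist x x' + |s - s'|)

theorem IsLipHomotopyOn.comp {K L c : ℝ} {U : Set Y} {J : Set ℝ} {h : Y → ℝ → M}
    (hh : IsLipHomotopyOn K U J h) (hK : 0 ≤ K) {S : Set X} {I : Set ℝ} {f : X → Y}
    (hfS : MapsTo f S U) (hf : ∀ x ∈ S, ∀ x' ∈ S, dist (f x) (f x') ≤ L * dist x x')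
    {τ : ℝ → ℝ} (hτI : MapsTo τ I J) (hτ : ∀ s ∈ I, ∀ s' ∈ I, |τ s - τ s'| ≤ c * |s - s'|) :
    IsLipHomotopyOn (K * max L c) S I (fun x t => h (f x) (τ t)) := by
  intro x hx x' hx' s hs s' hs'
  calc dist (h (f x) (τ s)) (h (f x') (τ s'))
      ≤ K * (dist (f x) (f x') + |τ s - τ s'|) := hh _ (hfS hx) _ (hfS hx') _ (hτI hs) _ (hτI hs')
    _ ≤ K * (L * dist x x' + c * |s - s'|) := by
        gcongr
        exacts [hf x hx x' hx', hτ s hs s' hs']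
    _ ≤ K * (max L c * dist x x' + max L c * |s - s'|) := by
        gcongr
        exacts [le_max_left L c, le_max_right L c]
    _ = K * max L c * (dist x x' + |s - s'|) := by ring

theorem IsLipHomotopyOn.piecewise {K a m b : ℝ} {S : Set X} {g₀ g₁ : X → ℝ → M}
    (hg₀ : IsLipHomotopyOn K S (Icc a m) g₀) (hg₁ : IsLipHomotopyOn K S (Icc m b) g₁)
    (hseam : ∀ x ∈ S, g₀ x m = g₁ x m) :
    IsLipHomotopyOn K S (Icc a b) (fun x t => if t ≤ m then g₀ x t else g₁ x t) := by
  have across : ∀ x ∈ S, ∀ x' ∈ S, ∀ s ∈ Icc a m, ∀ s' ∈ Icc m b,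
      dist (g₀ x s) (g₁ x' s') ≤ K * (dist x x' + |s - s'|) := by
    intro x hx x' hx' s hs s' hs'
    have hm₀ : m ∈ Icc a m := ⟨hs.1.trans hs.2, le_rfl⟩
    have hm₁ : m ∈ Icc m b := ⟨le_rfl, hs'.1.trans hs'.2⟩
    calc dist (g₀ x s) (g₁ x' s') ≤ dist (g₀ x s) (g₀ x' m) + dist (g₁ x' m) (g₁ x' s') := by
          rw [← hseam x' hx']; exact dist_triangle _ _ _
      _ ≤ K * (dist x x' + |s - m|) + K * (dist x' x' + |m - s'|) :=
          add_le_add (hg₀ x hx x' hx' s hs m hm₀) (hg₁ x' hx' x' hx' m hm₁ s' hs')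
      _ = K * (dist x x' + |s - s'|) := by
          rw [dist_self, abs_of_nonpos (sub_nonpos.2 hs.2), abs_of_nonpos (sub_nonpos.2 hs'.1),
            abs_of_nonpos (sub_nonpos.2 (hs.2.trans hs'.1))]
          ring
  intro x hx x' hx' s hs s' hs'
  dsimp only
  split_ifs with h h' h'
  · exact hg₀ x hx x' hx' s ⟨hs.1, h⟩ s' ⟨hs'.1, h'⟩
  · exact across x hx x' hx' s ⟨hs.1, h⟩ s' ⟨(not_le.1 h').le, hs'.2⟩
  · rw [dist_comm, dist_comm x, abs_sub_comm]
    exact across x' hx' x hx s' ⟨hs'.1, h'⟩ s ⟨(not_le.1 h).le, hs.2⟩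
  · exact hg₁ x hx x' hx' s ⟨(not_le.1 h).le, hs.2⟩ s' ⟨(not_le.1 h').le, hs'.2⟩

end LipHomotopy

theorem exists_isLipHomotopyOn_of_lipStronglyContractible {X M : Type*} [PseudoMetricSpace X]
    [MetricSpace M] {C K L ε : ℝ} {U : Set M} (hU : LipStronglyContractible C (K * ε) U)
    (hC : 0 ≤ C) (hK : 0 ≤ K) (hε : 0 < ε) {S : Set X} {f₀ f₁ : X → M}
    (hf₀U : MapsTo f₀ S U) (hf₁U : MapsTo f₁ S U)
    (hf₀ : ∀ x ∈ S, ∀ x' ∈ S, dist (f₀ x) (f₀ x') ≤ L * dist x x')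
    (hf₁ : ∀ x ∈ S, ∀ x' ∈ S, dist (f₁ x) (f₁ x') ≤ L * dist x x') :
    ∃ h : X → ℝ → M, IsLipHomotopyOn (C * max L (2 * K)) S (Icc 0 ε) h ∧
      (∀ x ∈ S, h x 0 = f₀ x) ∧ (∀ x ∈ S, h x ε = f₁ x) := by
  obtain ⟨p, -, φ, -, (hφ : IsLipHomotopyOn C U (Icc 0 (K * ε)) φ), hφ₀, hφp, -⟩ := hU
  have hforward : MapsTo (fun t => 2 * K * t) (Icc 0 (ε / 2)) (Icc 0 (K * ε)) :=
    fun t ht => ⟨mul_nonneg (by positivity) ht.1, by nlinarith [ht.2]⟩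
  have hbackward : MapsTo (fun t => 2 * K * (ε - t)) (Icc (ε / 2) ε) (Icc 0 (K * ε)) :=
    fun t ht => ⟨mul_nonneg (by positivity) (sub_nonneg.2 ht.2), by nlinarith [ht.1]⟩
  refine ⟨fun x t => if t ≤ ε / 2 then φ (f₀ x) (2 * K * t) else φ (f₁ x) (2 * K * (ε - t)),
    IsLipHomotopyOn.piecewise (hφ.comp hC hf₀U hf₀ hforward ?_) (hφ.comp hC hf₁U hf₁ hbackward ?_)
      ?_, ?_, ?_⟩
  · intro s _ s' _
    rw [← mul_sub, abs_mul, abs_of_nonneg (by positivity)]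
  · intro s _ s' _
    rw [← mul_sub, abs_mul, abs_of_nonneg (by positivity), sub_sub_sub_cancel_left, abs_sub_comm]
  · intro x hx
    have hmid : 2 * K * (ε / 2) = K * ε ∧ 2 * K * (ε - ε / 2) = K * ε := by constructor <;> ring
    rw [hmid.1, hmid.2, hφp _ (hf₀U hx), hφp _ (hf₁U hx)]
  · intro x hx
    dsimp only
    rw [if_pos (by positivity), mul_zero, hφ₀ _ (hf₀U hx)]
  · intro x hx
    dsimp only
    rw [if_neg (not_le.2 (half_lt_self hε)), sub_self, mul_zero, hφ₀ _ (hf₁U hx)]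

theorem mapsTo_ball_of_lipschitzOn_of_dist_le {X M : Type*} [PseudoMetricSpace X]
    [PseudoMetricSpace M] {C D ε r : ℝ} {S : Set X} {f₀ f₁ : X → M} {x₀ : X} (hx₀ : x₀ ∈ S)
    (hC : 0 ≤ C) (hS : ∀ x ∈ S, dist x x₀ ≤ D)
    (hf₀ : ∀ x ∈ S, ∀ x' ∈ S, dist (f₀ x) (f₀ x') ≤ C * dist x x')
    (hclose : ∀ x ∈ S, dist (f₀ x) (f₁ x) ≤ ε) (hr : ε + C * D < r) :
    MapsTo f₀ S (ball (f₀ x₀) r) ∧ MapsTo f₁ S (ball (f₀ x₀) r) := by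
  have hf₀x₀ : ∀ x ∈ S, dist (f₀ x) (f₀ x₀) ≤ C * D := fun x hx =>
    (hf₀ x hx x₀ hx₀).trans (mul_le_mul_of_nonneg_left (hS x hx) hC)
  have hε : 0 ≤ ε := dist_nonneg.trans (hclose x₀ hx₀)
  refine ⟨fun x hx => mem_ball.2 (by linarith [hf₀x₀ x hx]), fun x hx => mem_ball.2 ?_⟩
  calc dist (f₁ x) (f₀ x₀) ≤ dist (f₀ x) (f₁ x) + dist (f₀ x) (f₀ x₀) := dist_triangle_left _ _ _
    _ < r := by linarith [hclose x hx, hf₀x₀ x hx]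

theorem norm_le_of_mem_scaledSimplex {n : ℕ} {ε : ℝ} {x : EuclideanSpace ℝ (Fin (n + 1))}
    (hx : x ∈ scaledSimplex n ε) : ‖x‖ ≤ ε := by
  obtain ⟨hnonneg, hsum⟩ := hx
  calc ‖x‖ = √(∑ i, x i ^ 2) := by simp only [EuclideanSpace.norm_eq, Real.norm_eq_abs, sq_abs]
    _ ≤ √((∑ i, x i) ^ 2) :=
        Real.sqrt_le_sqrt (Finset.sum_sq_le_sq_sum_of_nonneg fun i _ => hnonneg i)
    _ = ε := by rw [hsum, Real.sqrt_sq (hsum ▸ Finset.sum_nonneg fun i _ => hnonneg i)]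

theorem dist_le_of_mem_scaledSimplex {n : ℕ} {ε : ℝ} {x y : EuclideanSpace ℝ (Fin (n + 1))}
    (hx : x ∈ scaledSimplex n ε) (hy : y ∈ scaledSimplex n ε) : dist x y ≤ 2 * ε := by
  linarith [dist_le_norm_add_norm x y, norm_le_of_mem_scaledSimplex hx,
    norm_le_of_mem_scaledSimplex hy]

theorem single_zero_mem_scaledSimplex {n : ℕ} {ε : ℝ} (hε : 0 ≤ ε) :
    EuclideanSpace.single 0 ε ∈ scaledSimplex n ε := by
  refine ⟨fun i => ?_, by simp⟩
  rw [PiLp.single_apply]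
  split_ifs <;> simp [hε]

/-- **Corollary.** For every `C > 0` and `n ≥ 0` there are `C̃ > 0` and `ε₀ > 0`,
depending only on `C` and `n`, such that: if `M` is locally `C`-Lipschitz contractible,
`0 < ε < ε₀`, and `f₀, f₁` are `C`-Lipschitz maps from the `ε`-scaled standard
`n`-simplex `Δ` to `M` with `dist (f₀ x) (f₁ x) ≤ ε` on `Δ`, then `f₀` and `f₁` are
`(C̃, ε)`-Lipschitz homotopic (as maps on `Δ`). -/
theorem lipschitz_homotopic_of_close_on_simplex :
    ∀ C : ℝ, 0 < C → ∀ n : ℕ, ∃ Ct : ℝ, 0 < Ct ∧ ∃ ε₀ : ℝ, 0 < ε₀ ∧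
      ∀ (M : Type*) [MetricSpace M], LocallyLipContractible M C →
      ∀ ε : ℝ, 0 < ε → ε < ε₀ →
      ∀ f₀ f₁ : EuclideanSpace ℝ (Fin (n + 1)) → M,
        (∀ x ∈ scaledSimplex n ε, ∀ x' ∈ scaledSimplex n ε,
          dist (f₀ x) (f₀ x') ≤ C * dist x x') →
        (∀ x ∈ scaledSimplex n ε, ∀ x' ∈ scaledSimplex n ε,
          dist (f₁ x) (f₁ x') ≤ C * dist x x') →
        (∀ x ∈ scaledSimplex n ε, dist (f₀ x) (f₁ x) ≤ ε) →
        ∃ h : EuclideanSpace ℝ (Fin (n + 1)) → ℝ → M,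
          (∀ x ∈ scaledSimplex n ε, ∀ x' ∈ scaledSimplex n ε,
            ∀ s ∈ Set.Icc (0 : ℝ) ε, ∀ s' ∈ Set.Icc (0 : ℝ) ε,
              dist (h x s) (h x' s') ≤ Ct * (dist x x' + |s - s'|)) ∧
          (∀ x ∈ scaledSimplex n ε, h x 0 = f₀ x) ∧
          (∀ x ∈ scaledSimplex n ε, h x ε = f₁ x) := by
  intro C hC n
  set K := 2 * C + 2
  have hK : 0 < K := by positivity
  refine ⟨C * max C (2 * K), by positivity, C⁻¹ / K, by positivity, ?_⟩
  intro M _ hM ε hε hεlt f₀ f₁ hf₀ hf₁ hclose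
  have hx₀ := single_zero_mem_scaledSimplex (n := n) hε.le
  obtain ⟨U, -, hball, hU⟩ :=
    hM (f₀ (EuclideanSpace.single 0 ε)) (K * ε) (by positivity) ((lt_div_iff₀' hK).1 hεlt)
  obtain ⟨hf₀U, hf₁U⟩ := mapsTo_ball_of_lipschitzOn_of_dist_le hx₀ hC.le
    (fun x hx => dist_le_of_mem_scaledSimplex hx hx₀) hf₀ hclose (r := K * ε) (by linarith)
  exact exists_isLipHomotopyOn_of_lipStronglyContractible hU hC.le hK.le hε
    (hf₀U.mono_right hball) (hf₁U.mono_right hball) hf₀ hf₁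
end
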